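/- arXiv:2103.14159 — 7 statements merged into one kernel-verified Lean document; each statement's English description precedes it below -/
import Mathlib

section
/- Let 𝒜 be an abelian category, V an object, and I a set such that the coproduct V^{(I)} exists in 𝒜. If there exists a cogenerating class 𝒳 ⊆ V^{⊥1} that is closed under taking quotients, then V^{(I)} has projective dimension ≤ 1, i.e. Ext^2_𝒜(V^{(I)}, A) = 0 for every object A. -/
/-!
Common definitions for formalizing results of "Tilting preenvelopes and cotilting
precovers in general Abelian categories" (Parra–Saorín–Virili).

Conventions:
* Full subcategories of an abelian category `C` are encoded as `Set C`.
* "Sets" (index sets of families, coproducts, …) are encoded as types in the universe `v`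
  of the morphisms of `C`.
* `Ext¹(X,Y) = 0` is encoded via the splitting of all short exact sequences
  `0 → Y → E → X → 0` (equivalently, the vanishing of the Yoneda Ext group).
* Relative (`…In B`) notions encode the corresponding notion computed inside the
  full (abelian exact) subcategory determined by `B : Set C`; the ambient case is
  `B = Set.univ`.
* Coproducts are not assumed to exist: a coproduct of a family existing in the
  (sub)category is encoded by a cocone with the universal property (`IsCoproductIn`).
-/

open CategoryTheory CategoryTheory.Limits

universe w v u

attribute [local instance] CategoryTheory.Abelian.hasFiniteBiproducts

namespace Paper

variable {C : Type u} [Category.{v} C] [Abelian C]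

/-- `(i, p)` is a short exact sequence `0 ⟶ A ⟶ E ⟶ B ⟶ 0` in `C`. -/
def IsShortExact {A E B : C} (i : A ⟶ E) (p : E ⟶ B) : Prop :=
  ∃ hw : i ≫ p = 0, (ShortComplex.mk i p hw).ShortExact

/-- `Q`, together with the injections `ι`, is the coproduct of the family `f`
inside the full subcategory determined by `B`. -/
structure IsCoproductIn (B : Set C) {I : Type v} (f : I → C) (Q : C)
    (ι : ∀ i, f i ⟶ Q) : Prop where
  mem : ∀ i, f i ∈ B
  memQ : Q ∈ B
  desc : ∀ Z ∈ B, ∀ g : (∀ i, f i ⟶ Z), ∃! h : Q ⟶ Z, ∀ i, ι i ≫ h = g i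

/-- `Ext¹(X, Y) = 0`, computed in the full subcategory determined by `B`:
every short exact sequence `0 → Y → E → X → 0` with `E ∈ B` splits. -/
def Ext1ZeroIn (B : Set C) (X Y : C) : Prop :=
  ∀ E ∈ B, ∀ (i : Y ⟶ E) (p : E ⟶ X), IsShortExact i p → ∃ r : E ⟶ Y, i ≫ r = 𝟙 Y

/-- `Ext¹(X, Y) = 0` in the ambient abelian category. -/
def Ext1Zero (X Y : C) : Prop := Ext1ZeroIn Set.univ X Y

/-- `V^{⊥₁}`, computed in (the full subcategory determined by) `B`. -/
def rightPerp (B : Set C) (V : C) : Set C := {A ∈ B | Ext1ZeroIn B V A}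

/-- `^{⊥₁}T`, computed in `B`. -/
def leftPerpSet (B T : Set C) : Set C := {A ∈ B | ∀ X ∈ T, Ext1ZeroIn B A X}

/-- `T^{⊥₁}`, computed in `B`. -/
def rightPerpSet (B T : Set C) : Set C := {A ∈ B | ∀ X ∈ T, Ext1ZeroIn B X A}

/-- `Sub(X)` relative to `B`: objects of `B` admitting a monomorphism into an object of `X`. -/
def subIn (B X : Set C) : Set C := {A ∈ B | ∃ T ∈ X, ∃ f : A ⟶ T, Mono f}

/-- `Quot(X)` relative to `B`: objects of `B` which are epimorphic images of objects of `X`. -/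
def quotIn (B X : Set C) : Set C := {A ∈ B | ∃ T ∈ X, ∃ f : T ⟶ A, Epi f}

/-- `(T, F)` is a torsion pair in (the full subcategory determined by) `B`. -/
structure IsTorsionPairIn (B T F : Set C) : Prop where
  eqF : F = {A ∈ B | ∀ X ∈ T, ∀ f : X ⟶ A, f = 0}
  eqT : T = {A ∈ B | ∀ Y ∈ F, ∀ f : A ⟶ Y, f = 0}
  seq : ∀ A ∈ B, ∃ (X Y : C) (i : X ⟶ A) (p : A ⟶ Y), X ∈ T ∧ Y ∈ F ∧ IsShortExact i p

/-- `T` is a torsion class in `B`. -/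
def IsTorsionClassIn (B T : Set C) : Prop := ∃ F, IsTorsionPairIn B T F

/-- `F` is a torsion-free class in `B`. -/
def IsTorsionFreeClassIn (B F : Set C) : Prop := ∃ T, IsTorsionPairIn B T F

/-- `φ : M ⟶ X` is a `T`-preenvelope. -/
structure IsPreenvelope (T : Set C) {M X : C} (φ : M ⟶ X) : Prop where
  mem : X ∈ T
  fac : ∀ T' ∈ T, ∀ g : M ⟶ T', ∃ h : X ⟶ T', φ ≫ h = g

/-- `φ` is a semi-special `T`-preenvelope (relative to `B`):
a `T`-preenvelope whose cokernel lies in `^{⊥₁}T` (computed in `B`). -/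
def IsSemiSpecialPreenvelopeIn (B T : Set C) {M X : C} (φ : M ⟶ X) : Prop :=
  IsPreenvelope T φ ∧ cokernel φ ∈ leftPerpSet B T

/-- `φ` is a special `T`-preenvelope (relative to `B`). -/
def IsSpecialPreenvelopeIn (B T : Set C) {M X : C} (φ : M ⟶ X) : Prop :=
  Mono φ ∧ IsSemiSpecialPreenvelopeIn B T φ

/-- `T` is preenveloping in `B`. -/
def PreenvelopingIn (B T : Set C) : Prop :=
  ∀ M ∈ B, ∃ (X : C) (φ : M ⟶ X), IsPreenvelope T φ

/-- `T` is semi-special preenveloping in `B`. -/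
def SemiSpecialPreenvelopingIn (B T : Set C) : Prop :=
  ∀ M ∈ B, ∃ (X : C) (φ : M ⟶ X), IsSemiSpecialPreenvelopeIn B T φ

/-- `T` is special preenveloping in `B`. -/
def SpecialPreenvelopingIn (B T : Set C) : Prop :=
  ∀ M ∈ B, ∃ (X : C) (φ : M ⟶ X), IsSpecialPreenvelopeIn B T φ

/-- `φ : X ⟶ M` is a `T`-precover. -/
structure IsPrecover (T : Set C) {X M : C} (φ : X ⟶ M) : Prop where
  mem : X ∈ T
  fac : ∀ T' ∈ T, ∀ g : T' ⟶ M, ∃ h : T' ⟶ X, h ≫ φ = g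

/-- `φ` is a semi-special `T`-precover (relative to `B`):
a `T`-precover whose kernel lies in `T^{⊥₁}` (computed in `B`). -/
def IsSemiSpecialPrecoverIn (B T : Set C) {X M : C} (φ : X ⟶ M) : Prop :=
  IsPrecover T φ ∧ kernel φ ∈ rightPerpSet B T

/-- `T` is precovering in `B`. -/
def PrecoveringIn (B T : Set C) : Prop :=
  ∀ M ∈ B, ∃ (X : C) (φ : X ⟶ M), IsPrecover T φ

/-- `T` is semi-special precovering in `B`. -/
def SemiSpecialPrecoveringIn (B T : Set C) : Prop :=
  ∀ M ∈ B, ∃ (X : C) (φ : X ⟶ M), IsSemiSpecialPrecoverIn B T φ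

/-- `Add(V)` relative to `B`: direct summands of coproducts (existing in `B`)
of copies of `V`. -/
def addIn (B : Set C) (V : C) : Set C :=
  {A ∈ B | ∃ (I : Type v) (Q : C) (ι : ∀ _ : I, V ⟶ Q),
     IsCoproductIn B (fun _ : I => V) Q ι ∧ ∃ (s : A ⟶ Q) (r : Q ⟶ A), s ≫ r = 𝟙 A}

/-- `Gen(V)` relative to `B`: quotients of objects of `Add(V)`. -/
def genIn (B : Set C) (V : C) : Set C :=
  {A ∈ B | ∃ X ∈ addIn B V, ∃ p : X ⟶ A, Epi p}

/-- `Pres(V)` relative to `B`: cokernels of morphisms between objects of `Add(V)`. -/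
def presIn (B : Set C) (V : C) : Set C :=
  {A ∈ B | ∃ X ∈ addIn B V, ∃ Y ∈ addIn B V,
     ∃ (f : X ⟶ Y) (c : Y ⟶ A) (hw : f ≫ c = 0), Epi c ∧ (ShortComplex.mk f c hw).Exact}

/-- `Ḡen(V) = Sub(Gen(V))` relative to `B`. -/
def barGenIn (B : Set C) (V : C) : Set C := subIn B (genIn B V)

/-- The class `X` is cogenerating in `B`. -/
def CogeneratingIn (B X : Set C) : Prop := ∀ A ∈ B, ∃ T ∈ X, ∃ f : A ⟶ T, Mono f

/-- The class `X` is generating in `B`. -/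
def GeneratingIn (B X : Set C) : Prop := ∀ A ∈ B, ∃ T ∈ X, ∃ f : T ⟶ A, Epi f

/-- `V` is a quasi-tilting object of (the full subcategory determined by) `B`:
`Gen(V)` is a torsion class and `Gen(V) = Pres(V) = Ḡen(V) ∩ V^{⊥₁}`. -/
def IsQuasiTiltingIn (B : Set C) (V : C) : Prop :=
  V ∈ B ∧ IsTorsionClassIn B (genIn B V) ∧ genIn B V = presIn B V ∧
    genIn B V = barGenIn B V ∩ rightPerp B V

/-- `V` is a tilting object of `B`: quasi-tilting with `Gen(V)` cogenerating. -/
def IsTiltingIn (B : Set C) (V : C) : Prop :=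
  IsQuasiTiltingIn B V ∧ CogeneratingIn B (genIn B V)

/-- `G` is an epi-generator of `B`: every object of `B` is an epimorphic image of a
coproduct (existing in `B`) of copies of `G`. -/
def IsEpiGeneratorIn (B : Set C) (G : C) : Prop :=
  G ∈ B ∧ ∀ A ∈ B, ∃ (I : Type v) (Q : C) (ι : ∀ _ : I, G ⟶ Q),
    IsCoproductIn B (fun _ : I => G) Q ι ∧ ∃ p : Q ⟶ A, Epi p

/-- `0 → A —u→ X → V^{(J)} → 0` is a universal extension of `V` by `A` (relative to `B`):
the right end of the sequence is a nonempty coproduct of copies of `V` existing in `B`,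
and the induced map `Ext¹(V,A) → Ext¹(V,X)` is zero (encoded: for every extension
`0 → A —i→ E → V → 0` with `E ∈ B`, its pushout along `u` splits, i.e. `u` extends
along `i`). -/
def IsUniversalExtensionIn (B : Set C) (V A X : C) (u : A ⟶ X) : Prop :=
  A ∈ B ∧ X ∈ B ∧
  (∃ (J : Type v) (_ : Nonempty J) (P : C) (κ : ∀ _ : J, V ⟶ P) (p : X ⟶ P),
     IsCoproductIn B (fun _ : J => V) P κ ∧ IsShortExact u p) ∧
  (∀ E ∈ B, ∀ (i : A ⟶ E) (q : E ⟶ V), IsShortExact i q → ∃ ψ : E ⟶ X, i ≫ ψ = u)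

/-- `V` is `Ext¹`-universal in `B`: universal extensions of `V` by every object exist. -/
def IsExt1UniversalIn (B : Set C) (V : C) : Prop :=
  ∀ A ∈ B, ∃ (X : C) (u : A ⟶ X), IsUniversalExtensionIn B V A X u

/-- `(X, Y)` is a cotorsion pair in (the full subcategory determined by) `B`. -/
def IsCotorsionPairIn (B X Y : Set C) : Prop :=
  Y = {A ∈ B | ∀ Z ∈ X, Ext1ZeroIn B Z A} ∧
  X = {A ∈ B | ∀ Z ∈ Y, Ext1ZeroIn B A Z}

/-- The pair `(X, Y)` is right complete in `B`: every `A ∈ B` admits a short exact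
sequence `0 → A → Y' → X' → 0` with `Y' ∈ Y`, `X' ∈ X`. -/
def RightCompleteIn (B X Y : Set C) : Prop :=
  ∀ A ∈ B, ∃ (Y' X' : C) (i : A ⟶ Y') (p : Y' ⟶ X'), Y' ∈ Y ∧ X' ∈ X ∧ IsShortExact i p

/-- The pair `(X, Y)` is left complete in `B`: every `A ∈ B` admits a short exact
sequence `0 → Y' → X' → A → 0` with `Y' ∈ Y`, `X' ∈ X`. -/
def LeftCompleteIn (B X Y : Set C) : Prop :=
  ∀ A ∈ B, ∃ (Y' X' : C) (i : Y' ⟶ X') (p : X' ⟶ A), Y' ∈ Y ∧ X' ∈ X ∧ IsShortExact i p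

/-- The full subcategory determined by `B` is reflective in `C`:
the (fully faithful) inclusion functor has a left adjoint. -/
def IsReflectiveSub (B : Set C) : Prop :=
  (ObjectProperty.ι (· ∈ B)).IsRightAdjoint

/-- The full subcategory determined by `B` is coreflective in `C`:
the inclusion functor has a right adjoint. -/
def IsCoreflectiveSub (B : Set C) : Prop :=
  (ObjectProperty.ι (· ∈ B)).IsLeftAdjoint

/-- `Ext²(V, A) = 0` (Yoneda `Ext²`): every `2`-fold extension
`0 → A —g→ X₁ —f→ X₀ —p→ V → 0` represents the trivial class, i.e. (by the standard
long-exact-sequence criterion) the extension `0 → A → X₁ → im f → 0` extends to an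
extension of `X₀` by `A`. -/
def Ext2Zero (V A : C) : Prop :=
  ∀ (X1 X0 : C) (g : A ⟶ X1) (f : X1 ⟶ X0) (p : X0 ⟶ V)
    (w1 : g ≫ f = 0) (w2 : f ≫ p = 0),
    Mono g → Epi p → (ShortComplex.mk g f w1).Exact → (ShortComplex.mk f p w2).Exact →
    ∃ (Y : C) (a : A ⟶ Y) (b : Y ⟶ X0), IsShortExact a b ∧
      ∃ φ : X1 ⟶ Y, g ≫ φ = a ∧ φ ≫ b = f

/-- `V` has projective dimension at most `1`: `Ext²(V, A) = 0` for every `A`. -/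
def ProjDimLE1 (V : C) : Prop := ∀ A : C, Ext2Zero V A

/-- The "elements" of the (possibly large) Yoneda `Ext¹(X, Y)`: short exact sequences
`0 → Y → E → X → 0`. -/
def ExtElem (X Y : C) : Type (max u v) :=
  Σ' (E : C) (i : Y ⟶ E) (p : E ⟶ X), IsShortExact i p

/-- Yoneda equivalence of extensions. -/
def extRel (X Y : C) : ExtElem X Y → ExtElem X Y → Prop :=
  fun e₁ e₂ => ∃ φ : e₁.1 ⟶ e₂.1, e₁.2.1 ≫ φ = e₂.2.1 ∧ φ ≫ e₂.2.2.1 = e₁.2.2.1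

/-- The (possibly large) Yoneda `Ext¹(X, Y)`, as the quotient of the collection
of extensions by Yoneda equivalence. -/
def ExtClass (X Y : C) : Type (max u v) := Quot (extRel X Y)

/-- `Ext¹(A, B)` is a finitely generated (right) `End(A)`-module: there are `n : ℕ` and a
short exact sequence `0 → B → X → A^n → 0` whose connecting map
`Hom(A, A^n) → Ext¹(A, B)` is surjective, i.e. every extension of `A` by `B` is a pullback
of the fixed one along some `h : A ⟶ A^n`. -/
def Ext1FGEnd (A B : C) : Prop :=
  ∃ (n : ℕ) (X : C) (u : B ⟶ X) (p : X ⟶ ⨁ (fun _ : Fin n => A)),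
    IsShortExact u p ∧
    ∀ (E : C) (i : B ⟶ E) (q : E ⟶ A), IsShortExact i q →
      ∃ (h : A ⟶ ⨁ (fun _ : Fin n => A)) (φ : E ⟶ X), i ≫ φ = u ∧ φ ≫ p = q ≫ h

/-- `∐¹_I f = 0`: for every `I`-indexed family of short exact sequences
`0 → Xᵢ → Yᵢ → fᵢ → 0`, the induced morphism `∐ Xᵢ → ∐ Yᵢ` between (existing)
coproducts is a monomorphism. -/
def CoprodDerivedZeroFam {I : Type v} (f : I → C) : Prop :=
  ∀ (X Y : I → C) (u : ∀ i, X i ⟶ Y i) (p : ∀ i, Y i ⟶ f i),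
    (∀ i, IsShortExact (u i) (p i)) →
    ∀ (QX QY : C) (ιX : ∀ i, X i ⟶ QX) (ιY : ∀ i, Y i ⟶ QY) (uu : QX ⟶ QY),
      IsCoproductIn Set.univ X QX ιX → IsCoproductIn Set.univ Y QY ιY →
      (∀ i, ιX i ≫ uu = u i ≫ ιY i) → Mono uu

/-- `∐¹_I V = 0` for the constant family at `V`. -/
def CoprodDerivedZero (I : Type v) (V : C) : Prop :=
  CoprodDerivedZeroFam (fun _ : I => V)

/-- Witness that the category `D` is `Hom`-finite: a commutative ring `R` together with an
`R`-linear structure on `D` for which all `Hom`-modules are finitely generated. -/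
structure HomFiniteStruct (D : Type u) [Category.{v} D] [Preadditive D] :
    Type (max u (v + 1)) where
  R : Type v
  [commRing : CommRing R]
  [linear : CategoryTheory.Linear R D]
  homFinite : ∀ A B : D, Module.Finite R (A ⟶ B)

/-- The category `D` is `Hom`-finite. -/
def HomFinite (D : Type u) [Category.{v} D] [Preadditive D] : Prop :=
  Nonempty (HomFiniteStruct D)

/-- `Q`, with injections `ι`, is a coproduct of the family `f` in an arbitrary category. -/
def IsCoproductCocone {D : Type u} [Category.{v} D] {I : Type w} (f : I → D) (Q : D)
    (ι : ∀ i, f i ⟶ Q) : Prop :=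
  ∀ (Z : D) (g : ∀ i, f i ⟶ Z), ∃! h : Q ⟶ Z, ∀ i, ι i ≫ h = g i

/-- The category `D` satisfies (Ab.4): it has all (small) coproducts, and coproducts
of monomorphisms are monomorphisms (for abelian categories, the latter is equivalent to
the exactness of coproducts). -/
def Ab4Type (D : Type u) [Category.{v} D] : Prop :=
  HasCoproducts.{v} D ∧
  ∀ (I : Type v) (X Y : I → D) (u : ∀ i, X i ⟶ Y i), (∀ i, Mono (u i)) →
    ∀ (QX QY : D) (ιX : ∀ i, X i ⟶ QX) (ιY : ∀ i, Y i ⟶ QY) (uu : QX ⟶ QY),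
      IsCoproductCocone X QX ιX → IsCoproductCocone Y QY ιY →
      (∀ i, ιX i ≫ uu = u i ≫ ιY i) → Mono uu

/-- The category `D` satisfies (Ab.5): it has all (small) coproducts and directed
(filtered) colimits of monomorphisms are monomorphisms (for abelian categories the
latter is equivalent to the exactness of directed colimits). -/
def Ab5Type (D : Type u) [Category.{v} D] : Prop :=
  HasCoproducts.{v} D ∧
  ∀ (J : Type v) [SmallCategory J] [IsFiltered J] (F G : J ⥤ D) (α : F ⟶ G),
    (∀ j, Mono (α.app j)) →
    ∀ (cF : Cocone F) (cG : Cocone G), IsColimit cF → IsColimit cG →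
      ∀ m : cF.pt ⟶ cG.pt, (∀ j, cF.ι.app j ≫ m = α.app j ≫ cG.ι.app j) → Mono m

/-- A ring `S` is left coherent: every finitely generated left ideal is finitely
presented as a left `S`-module. -/
def LeftCoherentRing (S : Type u) [Ring S] : Prop :=
  ∀ J : Submodule S S, J.FG → Module.FinitePresentation S J

/-- A ring `S` is right coherent: every finitely generated right ideal (i.e. finitely
generated left ideal of `Sᵐᵒᵖ`) is finitely presented as a right `S`-module. -/
def RightCoherentRing (S : Type u) [Ring S] : Prop :=
  ∀ J : Submodule Sᵐᵒᵖ Sᵐᵒᵖ, J.FG → Module.FinitePresentation Sᵐᵒᵖ J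

end Paper

/-!
STATEMENT 11 (Corollary `coro_proj_dim`).
-/

namespace Stmt11

open Paper CategoryTheory CategoryTheory.Limits

variable {C : Type u} [Category.{v} C] [Abelian C]

/-!
Since `Ext¹(V, -)` vanishes on `𝒳`, so does `Ext¹(V^{(I)}, -)`. Given a 2-extension
`0 → A → X₁ → X₀ → V^{(I)} → 0` with image `K = X₁/A`, embed `X₁` into some `T ∈ 𝒳`;
then `T/A ∈ 𝒳` as a quotient, so the induced `K → T/A` extends to `k' : X₀ → T/A`.
Pulling back `0 → A → T → T/A → 0` along `k'` yields an extension of `X₀` by `A`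
through which the 2-extension factors, so its class vanishes.
-/

lemma isShortExact_cokernel_π {A E : C} (i : A ⟶ E) [Mono i] :
    IsShortExact i (cokernel.π i) :=
  ⟨cokernel.condition i, .mk' (ShortComplex.exact_of_g_is_cokernel _ (cokernelIsCokernel i))
    inferInstance inferInstance⟩

lemma isShortExact_pullback {A E B B' : C} {i : A ⟶ E} {p : E ⟶ B}
    (hip : IsShortExact i p) (t : B' ⟶ B) :
    IsShortExact (pullback.lift i 0 (by rw [hip.1, zero_comp]) : A ⟶ pullback p t)
      (pullback.snd p t) := by
  obtain ⟨w, hS⟩ := hip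
  have := hS.mono_f
  have := hS.epi_g
  have : Mono (pullback.lift i 0 (by rw [w, zero_comp]) : A ⟶ pullback p t) :=
    mono_of_mono_fac (pullback.lift_fst _ _ _)
  refine ⟨pullback.lift_snd _ _ _, .mk' (ShortComplex.exact_of_f_is_kernel _ ?_)
    inferInstance inferInstance⟩
  refine KernelFork.IsLimit.ofι' _ _ fun {W} z hz => ?_
  have hz' : (z ≫ pullback.fst p t) ≫ p = 0 := by
    rw [Category.assoc, pullback.condition, ← Category.assoc, hz, zero_comp]
  obtain ⟨u, hu⟩ := KernelFork.IsLimit.lift' hS.fIsKernel _ hz'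
  refine ⟨u, pullback.hom_ext ?_ ?_⟩
  · rw [Category.assoc, pullback.lift_fst]
    exact hu
  · rw [Category.assoc, pullback.lift_snd, comp_zero]
    exact hz.symm

lemma isShortExact_pushout {A E B A' : C} {i : A ⟶ E} {p : E ⟶ B}
    (hip : IsShortExact i p) (t : A ⟶ A') :
    IsShortExact (pushout.inl t i)
      (pushout.desc 0 p (by rw [comp_zero, hip.1]) : pushout t i ⟶ B) := by
  obtain ⟨w, hS⟩ := hip
  have := hS.mono_f
  have := hS.epi_g
  have : Epi (pushout.desc 0 p (by rw [comp_zero, w]) : pushout t i ⟶ B) :=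
    epi_of_epi_fac (pushout.inr_desc _ _ _)
  refine ⟨pushout.inl_desc _ _ _, .mk' (ShortComplex.exact_of_g_is_cokernel _ ?_)
    inferInstance inferInstance⟩
  refine CokernelCofork.IsColimit.ofπ' _ _ fun {W} z hz => ?_
  have hz' : i ≫ pushout.inr t i ≫ z = 0 := by
    rw [← Category.assoc, ← pushout.condition, Category.assoc, hz, comp_zero]
  obtain ⟨u, hu⟩ := CokernelCofork.IsColimit.desc' hS.gIsCokernel _ hz'
  refine ⟨u, pushout.hom_ext ?_ ?_⟩
  · rw [← Category.assoc, pushout.inl_desc, zero_comp]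
    exact hz.symm
  · rw [← Category.assoc, pushout.inr_desc]
    exact hu

lemma exists_section_of_isShortExact {Y E B : C} {i : Y ⟶ E} {p : E ⟶ B}
    (hip : IsShortExact i p) (hY : Ext1Zero B Y) : ∃ s : B ⟶ E, s ≫ p = 𝟙 B := by
  obtain ⟨r, hr⟩ := hY E (Set.mem_univ _) i p hip
  obtain ⟨w, hS⟩ := hip
  exact ⟨_, (ShortComplex.Splitting.ofExactOfRetraction _ hS.exact r hr hS.epi_g).s_g⟩

lemma ext1Zero_of_isCoproductIn {I : Type v} {f : I → C} {Q : C} {ι : ∀ i, f i ⟶ Q}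
    (hQ : IsCoproductIn Set.univ f Q ι) {Y : C} (hY : ∀ i, Ext1Zero (f i) Y) :
    Ext1Zero Q Y := by
  intro E _ i p hip
  have hlift : ∀ a : I, ∃ s : f a ⟶ E, s ≫ p = ι a := by
    intro a
    obtain ⟨σ, hσ⟩ := exists_section_of_isShortExact (isShortExact_pullback hip (ι a)) (hY a)
    exact ⟨σ ≫ pullback.fst p (ι a), by simp [pullback.condition, reassoc_of% hσ]⟩
  choose s₀ hs₀ using hlift
  obtain ⟨s, hs, -⟩ := hQ.desc E (Set.mem_univ _) s₀
  have hsp : s ≫ p = 𝟙 Q := by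
    obtain ⟨_, -, huniq⟩ := hQ.desc Q (Set.mem_univ _) ι
    exact (huniq _ fun a => by rw [reassoc_of% hs, hs₀]).trans (huniq _ fun _ => by simp).symm
  obtain ⟨w, hS⟩ := hip
  exact ⟨_, (ShortComplex.Splitting.ofExactOfSection _ hS.exact s hsp hS.mono_f).f_r⟩

lemma exists_comp_eq_of_isShortExact {K X₀ Q Y : C} {m : K ⟶ X₀} {p : X₀ ⟶ Q}
    (hmp : IsShortExact m p) (hY : Ext1Zero Q Y) (k : K ⟶ Y) :
    ∃ k' : X₀ ⟶ Y, m ≫ k' = k := by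
  obtain ⟨r, hr⟩ := hY _ (Set.mem_univ _) _ _ (isShortExact_pushout hmp k)
  exact ⟨pushout.inr k m ≫ r, by rw [← Category.assoc, ← pushout.condition, Category.assoc,
    hr, Category.comp_id]⟩

lemma isShortExact_cokernel_desc {A X₁ X₀ Q : C} {g : A ⟶ X₁} {f : X₁ ⟶ X₀} {p : X₀ ⟶ Q}
    (w₁ : g ≫ f = 0) (w₂ : f ≫ p = 0) [Epi p] (hgf : (ShortComplex.mk g f w₁).Exact)
    (hfp : (ShortComplex.mk f p w₂).Exact) :
    IsShortExact (cokernel.desc g f w₁) p := by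
  have w : cokernel.desc g f w₁ ≫ p = 0 := by
    rw [← cancel_epi (cokernel.π g), cokernel.π_desc_assoc, w₂, comp_zero]
  let φ : ShortComplex.mk f p w₂ ⟶ ShortComplex.mk _ p w :=
    { τ₁ := cokernel.π g, τ₂ := 𝟙 X₀, τ₃ := 𝟙 Q }
  have : Epi φ.τ₁ := inferInstanceAs (Epi (cokernel.π g))
  have : IsIso φ.τ₂ := inferInstanceAs (IsIso (𝟙 X₀))
  have : Mono φ.τ₃ := inferInstanceAs (Mono (𝟙 Q))
  exact ⟨w, .mk' ((ShortComplex.exact_iff_of_epi_of_isIso_of_mono φ).1 hfp)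
    hgf.mono_cokernelDesc inferInstance⟩

/-- A 2-extension `0 → A → X₁ → X₀ → Q → 0` is trivial once `X₁` embeds into some `T`
with `Ext¹(Q, T/A) = 0`. -/
lemma exists_extension_of_ext1Zero_cokernel {A X₁ X₀ Q T : C} {g : A ⟶ X₁} {f : X₁ ⟶ X₀}
    {p : X₀ ⟶ Q} (w₁ : g ≫ f = 0) (w₂ : f ≫ p = 0) [Mono g] [Epi p]
    (hgf : (ShortComplex.mk g f w₁).Exact) (hfp : (ShortComplex.mk f p w₂).Exact)
    (j : X₁ ⟶ T) [Mono j] (hT : Ext1Zero Q (cokernel (g ≫ j))) :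
    ∃ (Y : C) (a : A ⟶ Y) (b : Y ⟶ X₀), IsShortExact a b ∧
      ∃ φ : X₁ ⟶ Y, g ≫ φ = a ∧ φ ≫ b = f := by
  set c := cokernel.π (g ≫ j)
  have hk : g ≫ j ≫ c = 0 := by rw [← Category.assoc, cokernel.condition]
  obtain ⟨k', hk'⟩ := exists_comp_eq_of_isShortExact
    (isShortExact_cokernel_desc w₁ w₂ hgf hfp) hT (cokernel.desc g (j ≫ c) hk)
  have hjc : j ≫ c = f ≫ k' := by
    rw [← cokernel.π_desc g f w₁, Category.assoc, hk', cokernel.π_desc]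
  refine ⟨_, _, _, isShortExact_pullback (isShortExact_cokernel_π (g ≫ j)) k',
    pullback.lift j f hjc, pullback.hom_ext ?_ ?_, pullback.lift_snd _ _ _⟩
  · rw [Category.assoc, pullback.lift_fst, pullback.lift_fst]
  · rw [Category.assoc, pullback.lift_snd, pullback.lift_snd, w₁]

theorem statement11 (V : C) (I : Type v) (Q : C) (ι : ∀ _ : I, V ⟶ Q)
    (hQ : IsCoproductIn Set.univ (fun _ : I => V) Q ι)
    (X : Set C)
    -- `𝒳 ⊆ V^{⊥₁}`:
    (hsub : X ⊆ rightPerp Set.univ V)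
    -- `𝒳` is cogenerating:
    (hcog : CogeneratingIn Set.univ X)
    -- `𝒳` is closed under quotients:
    (hquot : ∀ ⦃A B : C⦄, A ∈ X → ∀ p : A ⟶ B, Epi p → B ∈ X) :
    -- `pd (V^{(I)}) ≤ 1`, i.e. `Ext²(V^{(I)}, A) = 0` for every `A`:
    ∀ A : C, Ext2Zero Q A := by
  intro A X₁ X₀ g f p w₁ w₂ _ _ hgf hfp
  obtain ⟨T, hT, j, _⟩ := hcog X₁ (Set.mem_univ _)
  have hTA : cokernel (g ≫ j) ∈ X := hquot hT (cokernel.π (g ≫ j)) inferInstance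
  exact exists_extension_of_ext1Zero_cokernel w₁ w₂ hgf hfp j
    (ext1Zero_of_isCoproductIn hQ fun _ => (hsub hTA).2)

end Stmt11
end

section
/- Let 𝒜 be an abelian category, X an object, I a set such that I-indexed coproducts exist in 𝒜, and (V_i)_{i∈I} a family of objects such that ⨿^1_I V_i = 0. Then the canonical morphism Φ : Ext^1(⨿_{i∈I} V_i, X) → ∏_{i∈I} Ext^1(V_i, X) is an isomorphism of (possibly large) abelian groups. In particular, if V is any object with ⨿^1_I V = 0, then the canonical morphism Ext^1(V^{(I)}, X) → Ext^1(V, X)^I is an isomorphism. -/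
/-!
Common definitions for formalizing results of "Tilting preenvelopes and cotilting
precovers in general Abelian categories" (Parra–Saorín–Virili).

Conventions:
* Full subcategories of an abelian category `C` are encoded as `Set C`.
* "Sets" (index sets of families, coproducts, …) are encoded as types in the universe `v`
  of the morphisms of `C`.
* `Ext¹(X,Y) = 0` is encoded via the splitting of all short exact sequences
  `0 → Y → E → X → 0` (equivalently, the vanishing of the Yoneda Ext group).
* Relative (`…In B`) notions encode the corresponding notion computed inside the
  full (abelian exact) subcategory determined by `B : Set C`; the ambient case is
  `B = Set.univ`.
* Coproducts are not assumed to exist: a coproduct of a family existing in the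
  (sub)category is encoded by a cocone with the universal property (`IsCoproductIn`).
-/

open CategoryTheory CategoryTheory.Limits

universe w v u

attribute [local instance] CategoryTheory.Abelian.hasFiniteBiproducts

/-!
STATEMENT 12 (Proposition `prop.Ext-contrav-preserves-products`).
That the canonical map `Φ : Ext¹(∐ Vᵢ, X) → ∏ Ext¹(Vᵢ, X)` is an isomorphism is
encoded by:
* injectivity (trivial kernel): an extension of `∐ Vᵢ` by `X` whose pullbacks along all
  coproduct injections split is itself split; and
* surjectivity: every `I`-indexed family of extensions of the `Vᵢ` by `X` is, up to
  Yoneda equivalence, the family of pullbacks along the injections of a single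
  extension of `∐ Vᵢ` by `X`.
-/

/-!
If every injection `ιⱼ : Vⱼ ⟶ ∐ V` lifts through `p`, the lifts assemble to a section of `p`;
this gives injectivity of `Φ`. For surjectivity, take the coproduct `∐ X ⟶ ∐ Eⱼ ⟶ ∐ Vⱼ` of
the given extensions: it is right exact because coproducts commute with cokernels, and its
first map is a monomorphism precisely because `∐¹ Vⱼ = 0`. Pushing it out along the
codiagonal `∐ X ⟶ X` yields an extension of `∐ Vⱼ` by `X`, and the coproduct injections of
the `Eⱼ` give morphisms of extensions from each `Eⱼ` to it.
-/

namespace Paper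

open CategoryTheory CategoryTheory.Limits

variable {C : Type u} [Category.{v} C]

noncomputable def IsCoproductIn.isColimitCofan {I : Type v} {f : I → C} {Q : C}
    {ι : ∀ i, f i ⟶ Q} (hQ : IsCoproductIn Set.univ f Q ι) : IsColimit (Cofan.mk Q ι) :=
  Cofan.IsColimit.mk _ (fun t => (hQ.desc t.pt trivial t.inj).choose)
    (fun t => (hQ.desc t.pt trivial t.inj).choose_spec.1)
    (fun t m hm => (hQ.desc t.pt trivial t.inj).choose_spec.2 m hm)

lemma isCoproductIn_univ_of_isColimit {I : Type v} {f : I → C} {c : Cofan f}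
    (hc : IsColimit c) : IsCoproductIn Set.univ f c.pt c.inj where
  mem _ := trivial
  memQ := trivial
  desc Z _ g := ⟨Cofan.IsColimit.desc hc g, Cofan.IsColimit.fac hc g,
    fun h hh => Cofan.IsColimit.hom_ext hc _ _ fun i => by simp [hh i]⟩

lemma IsCoproductIn.exists_section_of_forall_lift {I : Type v} {f : I → C} {Q : C}
    {ι : ∀ i, f i ⟶ Q} (hQ : IsCoproductIn Set.univ f Q ι) {Y : C} (p : Y ⟶ Q)
    (hl : ∀ j, ∃ l : f j ⟶ Y, l ≫ p = ι j) : ∃ s : Q ⟶ Y, s ≫ p = 𝟙 Q := by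
  choose l hl using hl
  obtain ⟨s, hs, -⟩ := hQ.desc Y trivial l
  exact ⟨s, Cofan.IsColimit.hom_ext hQ.isColimitCofan _ _ fun j => by
    simp [reassoc_of% (hs j), hl j]⟩

variable [Abelian C]

lemma isShortExact_pushout {A B V X : C} {a : A ⟶ B} {b : B ⟶ V} (h : IsShortExact a b)
    (g : A ⟶ X) :
    ∃ hw : a ≫ b = g ≫ (0 : X ⟶ V), IsShortExact (pushout.inr a g) (pushout.desc b 0 hw) := by
  obtain ⟨hab, hse⟩ := h
  have : Mono a := hse.mono_f
  have : Epi b := hse.epi_g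
  have hw : a ≫ b = g ≫ (0 : X ⟶ V) := by rw [hab, comp_zero]
  set p := pushout.desc b 0 hw
  have hup : pushout.inr a g ≫ p = 0 := pushout.inr_desc _ _ _
  have : Epi p := by
    have : Epi (pushout.inl a g ≫ p) := by rwa [pushout.inl_desc]
    exact epi_of_epi (pushout.inl a g) p
  have hcoker : IsColimit (CokernelCofork.ofπ p hup) :=
    CokernelCofork.IsColimit.ofπ' p hup fun t ht => by
      have ht' : a ≫ pushout.inl a g ≫ t = 0 := by
        rw [pushout.condition_assoc, ht, comp_zero]
      obtain ⟨w, hwt⟩ := CokernelCofork.IsColimit.desc' hse.gIsCokernel _ ht'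
      refine ⟨w, pushout.hom_ext ?_ ?_⟩
      · rw [pushout.inl_desc_assoc]
        exact hwt
      · simp [p, reassoc_of% hup, ht]
  exact ⟨hw, hup, .mk' (ShortComplex.exact_of_g_is_cokernel _ hcoker) inferInstance
    inferInstance⟩

lemma isShortExact_sigmaMap {I : Type v} [HasColimitsOfShape (Discrete I) C] {A E V : I → C}
    {i : ∀ j, A j ⟶ E j} {q : ∀ j, E j ⟶ V j} (h : ∀ j, IsShortExact (i j) (q j))
    [Mono (Limits.Sigma.map i)] {c : Cofan V} (hc : IsColimit c) :
    IsShortExact (Limits.Sigma.map i) (Sigma.desc fun j => q j ≫ c.inj j) := by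
  choose hw hse using h
  set qq := Sigma.desc fun j => q j ≫ c.inj j
  have hqq : Limits.Sigma.map i ≫ qq = 0 := by ext j; simp [qq, reassoc_of% (hw j)]
  have : ∀ j, Epi (q j) := fun j => (hse j).epi_g
  have : Epi qq := ⟨fun a b hab => Cofan.IsColimit.hom_ext hc _ _ fun j => by
    simpa [qq, cancel_epi] using Sigma.ι _ j ≫= hab⟩
  have hcoker : IsColimit (CokernelCofork.ofπ qq hqq) :=
    CokernelCofork.IsColimit.ofπ' qq hqq fun t ht => by
      have ht' : ∀ j, i j ≫ Sigma.ι E j ≫ t = 0 := fun j => by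
        simpa using Sigma.ι _ j ≫= ht
      let w j := (CokernelCofork.IsColimit.desc' (hse j).gIsCokernel _ (ht' j)).1
      refine ⟨Cofan.IsColimit.desc hc w, Sigma.hom_ext _ _ fun j => ?_⟩
      simpa [qq, w] using (CokernelCofork.IsColimit.desc' (hse j).gIsCokernel _ (ht' j)).2
  exact ⟨hqq, .mk' (ShortComplex.exact_of_g_is_cokernel _ hcoker) inferInstance inferInstance⟩

lemma exists_extension_of_forall_isShortExact {I : Type v} [HasColimitsOfShape (Discrete I) C]
    {f : I → C} (hf : CoprodDerivedZeroFam f) {Q : C} {ι : ∀ i, f i ⟶ Q}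
    (hQ : IsCoproductIn Set.univ f Q ι) {X : C} {E : I → C} {i : ∀ j, X ⟶ E j}
    {q : ∀ j, E j ⟶ f j} (h : ∀ j, IsShortExact (i j) (q j)) :
    ∃ (Y : C) (u : X ⟶ Y) (p : Y ⟶ Q), IsShortExact u p ∧
      ∀ j, ∃ φ : E j ⟶ Y, i j ≫ φ = u ∧ φ ≫ p = q j ≫ ι j := by
  have : Mono (Limits.Sigma.map i) :=
    hf (fun _ => X) E i q h _ _ _ _ _ (isCoproductIn_univ_of_isColimit (coproductIsCoproduct _))
      (isCoproductIn_univ_of_isColimit (coproductIsCoproduct _)) (Sigma.ι_map i)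
  obtain ⟨_, hse⟩ :=
    isShortExact_pushout (isShortExact_sigmaMap h hQ.isColimitCofan) (Sigma.desc fun _ => 𝟙 X)
  refine ⟨_, _, _, hse, fun j => ⟨Sigma.ι E j ≫ pushout.inl _ _, ?_, ?_⟩⟩
  · rw [← Sigma.ι_map_assoc, pushout.condition, Sigma.ι_desc_assoc, Category.id_comp]
  · rw [Category.assoc, pushout.inl_desc, Sigma.ι_desc]
    rfl

end Paper

namespace Stmt12

open Paper CategoryTheory CategoryTheory.Limits

variable {C : Type u} [Category.{v} C] [Abelian C]

theorem statement12 (I : Type v) [HasColimitsOfShape (Discrete I) C]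
    (f : I → C) (hf : CoprodDerivedZeroFam f)
    (Q : C) (ι : ∀ i, f i ⟶ Q) (hQ : IsCoproductIn Set.univ f Q ι) (X : C) :
    -- Φ is injective:
    ((∀ (Y : C) (u : X ⟶ Y) (p : Y ⟶ Q), IsShortExact u p →
        (∀ j, ∃ l : f j ⟶ Y, l ≫ p = ι j) → ∃ s : Q ⟶ Y, s ≫ p = 𝟙 Q) ∧
     -- Φ is surjective:
     (∀ (E : I → C) (i : ∀ j, X ⟶ E j) (q : ∀ j, E j ⟶ f j),
        (∀ j, IsShortExact (i j) (q j)) →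
        ∃ (Y : C) (u : X ⟶ Y) (p : Y ⟶ Q), IsShortExact u p ∧
          ∀ j, ∃ φ : E j ⟶ Y, i j ≫ φ = u ∧ φ ≫ p = q j ≫ ι j)) ∧
    -- In particular, for a constant family at an object `V` with `∐¹_I V = 0`, the
    -- canonical map `Ext¹(V^{(I)}, X) → Ext¹(V, X)^I` is an isomorphism:
    (∀ (V : C), CoprodDerivedZero I V →
      ∀ (QV : C) (κ : ∀ _ : I, V ⟶ QV),
        IsCoproductIn Set.univ (fun _ : I => V) QV κ →
        ((∀ (Y : C) (u : X ⟶ Y) (p : Y ⟶ QV), IsShortExact u p →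
            (∀ j : I, ∃ l : V ⟶ Y, l ≫ p = κ j) → ∃ s : QV ⟶ Y, s ≫ p = 𝟙 QV) ∧
         (∀ (E : I → C) (i : ∀ j, X ⟶ E j) (q : ∀ j, E j ⟶ V),
            (∀ j, IsShortExact (i j) (q j)) →
            ∃ (Y : C) (u : X ⟶ Y) (p : Y ⟶ QV), IsShortExact u p ∧
              ∀ j, ∃ φ : E j ⟶ Y, i j ≫ φ = u ∧ φ ≫ p = q j ≫ κ j))) := by
  exact ⟨⟨fun _ _ p _ => hQ.exists_section_of_forall_lift p,
      fun _ _ _ => exists_extension_of_forall_isShortExact hf hQ⟩,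
    fun _ hV _ _ hQV => ⟨fun _ _ p _ => hQV.exists_section_of_forall_lift p,
      fun _ _ _ => exists_extension_of_forall_isShortExact hV hQV⟩⟩

end Stmt12
end

section
/- Let 𝒜 be an (Ab.3) abelian category and V an object. If V is Ext^1-universal, then Ext^1(V,A) is a set (as opposed to a proper class) for every object A. Moreover, if ⨿^1_I V = 0 for every set I, then the converse holds: if Ext^1(V,A) is a set for every object A, then V is Ext^1-universal. -/
/-!
Common definitions for formalizing results of "Tilting preenvelopes and cotilting
precovers in general Abelian categories" (Parra–Saorín–Virili).

Conventions:
* Full subcategories of an abelian category `C` are encoded as `Set C`.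
* "Sets" (index sets of families, coproducts, …) are encoded as types in the universe `v`
  of the morphisms of `C`.
* `Ext¹(X,Y) = 0` is encoded via the splitting of all short exact sequences
  `0 → Y → E → X → 0` (equivalently, the vanishing of the Yoneda Ext group).
* Relative (`…In B`) notions encode the corresponding notion computed inside the
  full (abelian exact) subcategory determined by `B : Set C`; the ambient case is
  `B = Set.univ`.
* Coproducts are not assumed to exist: a coproduct of a family existing in the
  (sub)category is encoded by a cocone with the universal property (`IsCoproductIn`).
-/

open CategoryTheory CategoryTheory.Limits

universe w v u

attribute [local instance] CategoryTheory.Abelian.hasFiniteBiproducts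

/-!
STATEMENT 13 (Proposition `prop_ext_univ_infinite`).
"`Ext¹(V,A)` is a set (as opposed to a proper class)" is encoded by the `v`-smallness
of the class `ExtClass V A` of Yoneda-equivalence classes of extensions.
-/

namespace Stmt13

open Paper CategoryTheory CategoryTheory.Limits

variable {C : Type u} [Category.{v} C] [Abelian C]

/-
If `0 → A → X → P → 0` is short exact and every extension of `V` by `A` lifts along
`A → X`, then every such extension is the pullback of this one along some `V ⟶ P`, so
`Ext¹(V, A)` is an image of the set `V ⟶ P`. Conversely, if the extensions
`(0 → A → E_k → V → 0)_{k ∈ K}` represent every class of `Ext¹(V, A)`, then `∐¹_K V = 0`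
makes `0 → A^{(K)} → ∐ E_k → V^{(K)} → 0` short exact, and its pushout along the
codiagonal `A^{(K)} → A` is a universal extension: each `E_k → ∐ E_k → pushout`
extends `A → pushout`.
-/

lemma _root_.Paper.IsShortExact.w {A E B : C} {i : A ⟶ E} {p : E ⟶ B} (h : IsShortExact i p) :
    i ≫ p = 0 :=
  h.fst

lemma _root_.Paper.IsShortExact.shortExact {A E B : C} {i : A ⟶ E} {p : E ⟶ B}
    (h : IsShortExact i p) : (ShortComplex.mk i p h.w).ShortExact :=
  h.snd

lemma isCoproductIn_univ {D : Type u} [Category.{v} D] {I : Type v} (f : I → D)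
    [HasCoproduct f] : IsCoproductIn Set.univ f (∐ f) (Sigma.ι f) where
  mem _ := trivial
  memQ := trivial
  desc _ _ g := ⟨Sigma.desc g, fun i => Sigma.ι_desc _ _,
    fun h hh => Sigma.hom_ext _ _ (fun i => by rw [hh i, Sigma.ι_desc])⟩

section PullbackPushout

variable {A X P V : C}

lemma isShortExact_pullback {u : A ⟶ X} {p : X ⟶ P} (hse : IsShortExact u p) (h : V ⟶ P) :
    IsShortExact (pullback.lift u 0 (by rw [hse.w, zero_comp]) : A ⟶ pullback p h)
      (pullback.snd p h) := by
  have hS := hse.shortExact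
  have : Mono u := hS.mono_f
  have : Epi p := hS.epi_g
  set l : A ⟶ pullback p h := pullback.lift u 0 (by rw [hse.w, zero_comp])
  have hlf : l ≫ pullback.fst p h = u := pullback.lift_fst _ _ _
  have hls : l ≫ pullback.snd p h = 0 := pullback.lift_snd _ _ _
  have : Mono l := by
    have : Mono (l ≫ pullback.fst p h) := by rw [hlf]; infer_instance
    exact mono_of_mono l (pullback.fst p h)
  refine ⟨hls, .mk' ?_ this inferInstance⟩
  apply ShortComplex.exact_of_f_is_kernel
  refine KernelFork.IsLimit.ofι' l hls fun k hk => ?_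
  have hk' : (k ≫ pullback.fst p h) ≫ p = 0 := by
    rw [Category.assoc, pullback.condition, ← Category.assoc, hk, zero_comp]
  refine ⟨hS.exact.lift (k ≫ pullback.fst p h) hk', pullback.hom_ext ?_ ?_⟩
  · rw [Category.assoc, hlf]
    exact hS.exact.lift_f _ _
  · rw [Category.assoc, hls, comp_zero, hk]

lemma isShortExact_pushout {m : A ⟶ X} {q : X ⟶ P} (hse : IsShortExact m q) (c : A ⟶ V) :
    IsShortExact (pushout.inr m c)
      (pushout.desc q 0 (by rw [hse.w, comp_zero]) : pushout m c ⟶ P) := by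
  have hS := hse.shortExact
  have : Mono m := hS.mono_f
  have : Epi q := hS.epi_g
  set d : pushout m c ⟶ P := pushout.desc q 0 (by rw [hse.w, comp_zero])
  have hld : pushout.inl m c ≫ d = q := pushout.inl_desc _ _ _
  have hrd : pushout.inr m c ≫ d = 0 := pushout.inr_desc _ _ _
  have : Epi d := by
    have : Epi (pushout.inl m c ≫ d) := by rw [hld]; infer_instance
    exact epi_of_epi (pushout.inl m c) d
  refine ⟨hrd, .mk' ?_ inferInstance this⟩
  apply ShortComplex.exact_of_g_is_cokernel
  refine CokernelCofork.IsColimit.ofπ' d hrd fun k hk => ?_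
  have hk' : m ≫ pushout.inl m c ≫ k = 0 := by
    rw [← Category.assoc, pushout.condition, Category.assoc, hk, comp_zero]
  refine ⟨hS.exact.desc (pushout.inl m c ≫ k) hk', pushout.hom_ext ?_ ?_⟩
  · rw [← Category.assoc, hld]
    exact hS.exact.g_desc _ _
  · rw [← Category.assoc, hrd, zero_comp, hk]

end PullbackPushout

lemma isShortExact_sigmaMap {I : Type v} {X Y Z : I → C} [HasCoproduct X] [HasCoproduct Y]
    [HasCoproduct Z] (u : ∀ i, X i ⟶ Y i) (p : ∀ i, Y i ⟶ Z i)
    (hse : ∀ i, IsShortExact (u i) (p i)) [Mono (Limits.Sigma.map u)] :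
    IsShortExact (Limits.Sigma.map u) (Limits.Sigma.map p) := by
  have w : Limits.Sigma.map u ≫ Limits.Sigma.map p = 0 := by
    ext i
    simp [reassoc_of% (hse i).w]
  have : ∀ i, Epi (p i) := fun i => (hse i).shortExact.epi_g
  refine ⟨w, .mk' ?_ inferInstance inferInstance⟩
  apply ShortComplex.exact_of_g_is_cokernel
  refine CokernelCofork.IsColimit.ofπ' _ w fun t ht => ?_
  have hts : ∀ i, u i ≫ Sigma.ι Y i ≫ t = 0 := fun i => by
    rw [← Sigma.ι_map_assoc, ht, comp_zero]
  refine ⟨Sigma.desc fun i => (hse i).shortExact.exact.desc _ (hts i), Sigma.hom_ext _ _ ?_⟩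
  intro i
  rw [Sigma.ι_map_assoc, Sigma.ι_desc]
  exact (hse i).shortExact.exact.g_desc _ _

lemma extRel_equivalence (X Y : C) : Equivalence (extRel X Y) where
  refl _ := ⟨𝟙 _, Category.comp_id _, Category.id_comp _⟩
  symm := by
    rintro ⟨E₁, i₁, p₁, h₁⟩ ⟨E₂, i₂, p₂, h₂⟩ ⟨φ, hi, hp⟩
    let f : ShortComplex.mk i₁ p₁ h₁.w ⟶ ShortComplex.mk i₂ p₂ h₂.w :=
      { τ₁ := 𝟙 Y, τ₂ := φ, τ₃ := 𝟙 X
        comm₁₂ := by simpa using hi.symm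
        comm₂₃ := by simpa using hp }
    have : IsIso φ :=
      ShortComplex.isIso₂_of_shortExact_of_isIso₁₃ f h₁.shortExact h₂.shortExact
    exact ⟨inv φ, (IsIso.comp_inv_eq φ).mpr hi.symm, (IsIso.inv_comp_eq φ).mpr hp.symm⟩
  trans := by
    rintro _ _ _ ⟨φ, hφi, hφp⟩ ⟨ψ, hψi, hψp⟩
    exact ⟨φ ≫ ψ, by rw [← Category.assoc, hφi, hψi],
      by rw [Category.assoc, hψp, hφp]⟩

lemma extRel_of_mk_eq {X Y : C} {e₁ e₂ : ExtElem X Y}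
    (h : Quot.mk (extRel X Y) e₁ = Quot.mk _ e₂) : extRel X Y e₁ e₂ :=
  (extRel_equivalence X Y).eqvGen_iff.mp (Quot.eqvGen_exact h)

lemma nonempty_extClass (X Y : C) : Nonempty (ExtClass X Y) :=
  ⟨Quot.mk _ ⟨Y ⊞ X, biprod.inl, biprod.snd, biprod.inl_snd,
    ShortComplex.Splitting.shortExact { r := biprod.fst, s := biprod.inr }⟩⟩

lemma exists_extRel_representatives (X Y : C) [Small.{v} (ExtClass X Y)] :
    ∃ (K : Type v) (_ : Nonempty K) (e : K → ExtElem X Y),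
      ∀ e', ∃ k, extRel X Y e' (e k) := by
  have := nonempty_extClass X Y
  refine ⟨Shrink.{v} (ExtClass X Y), (equivShrink _).symm.nonempty,
    fun k => ((equivShrink _).symm k).out, fun e' => ⟨equivShrink _ (Quot.mk _ e'), ?_⟩⟩
  apply extRel_of_mk_eq
  exact ((Quot.out_eq _).trans (Equiv.symm_apply_apply _ _)).symm

section Universal

variable {V A : C}

noncomputable def pullbackExtElem {X P : C} {u : A ⟶ X} {p : X ⟶ P} (hse : IsShortExact u p)
    (h : V ⟶ P) : ExtElem V A :=
  ⟨pullback p h, _, pullback.snd p h, isShortExact_pullback hse h⟩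

lemma exists_extRel_pullbackExtElem {X P : C} {u : A ⟶ X} {p : X ⟶ P}
    (hse : IsShortExact u p) {E : C} {i : A ⟶ E} {q : E ⟶ V} (hq : IsShortExact i q)
    {ψ : E ⟶ X} (hψ : i ≫ ψ = u) :
    ∃ h : V ⟶ P, extRel V A ⟨E, i, q, hq⟩ (pullbackExtElem hse h) := by
  have hS := hq.shortExact
  have : Epi q := hS.epi_g
  have hz : i ≫ ψ ≫ p = 0 := by rw [← Category.assoc, hψ, hse.w]
  have hqh : q ≫ hS.exact.desc (ψ ≫ p) hz = ψ ≫ p := hS.exact.g_desc _ _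
  refine ⟨hS.exact.desc (ψ ≫ p) hz, pullback.lift ψ q hqh.symm, ?_, pullback.lift_snd _ _ _⟩
  dsimp only [pullbackExtElem]
  apply pullback.hom_ext
  · rw [Category.assoc, pullback.lift_fst, pullback.lift_fst, hψ]
  · rw [Category.assoc, pullback.lift_snd, pullback.lift_snd, hq.w]

theorem small_extClass_of_forall_lift {X P : C} {u : A ⟶ X} {p : X ⟶ P}
    (hse : IsShortExact u p)
    (hlift : ∀ (E : C) (i : A ⟶ E) (q : E ⟶ V), IsShortExact i q →
      ∃ ψ : E ⟶ X, i ≫ ψ = u) :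
    Small.{v} (ExtClass V A) := by
  refine small_of_surjective (f := fun h : V ⟶ P => Quot.mk _ (pullbackExtElem hse h)) ?_
  rintro ⟨E, i, q, hq⟩
  obtain ⟨ψ, hψ⟩ := hlift E i q hq
  obtain ⟨h, hrel⟩ := exists_extRel_pullbackExtElem hse hq hψ
  exact ⟨h, (Quot.sound hrel).symm⟩

theorem exists_isUniversalExtensionIn {K : Type v} [Nonempty K] [HasCoproductsOfShape K C]
    (hK : CoprodDerivedZero K V) (e : K → ExtElem V A)
    (he : ∀ e', ∃ k, extRel V A e' (e k)) :
    ∃ (X : C) (u : A ⟶ X), IsUniversalExtensionIn Set.univ V A X u := by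
  let E : K → C := fun k => (e k).1
  let i : ∀ k, A ⟶ E k := fun k => (e k).2.1
  let q : ∀ k, E k ⟶ V := fun k => (e k).2.2.1
  have hse : ∀ k, IsShortExact (i k) (q k) := fun k => (e k).2.2.2
  let m : ∐ (fun _ : K => A) ⟶ ∐ E := Limits.Sigma.map i
  have : Mono m := hK (fun _ => A) E i q hse _ _ _ _ m (isCoproductIn_univ _)
    (isCoproductIn_univ _) (Sigma.ι_map i)
  let c : ∐ (fun _ : K => A) ⟶ A := Sigma.desc fun _ => 𝟙 A
  refine ⟨pushout m c, pushout.inr m c, trivial, trivial,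
    ⟨K, inferInstance, _, _, _, isCoproductIn_univ _,
      isShortExact_pushout (isShortExact_sigmaMap i q hse) c⟩, ?_⟩
  rintro E' - i' q' hq'
  obtain ⟨k, φ, hφ, -⟩ := he ⟨E', i', q', hq'⟩
  refine ⟨φ ≫ Sigma.ι E k ≫ pushout.inl m c, ?_⟩
  change i' ≫ φ = i k at hφ
  rw [reassoc_of% hφ, ← Sigma.ι_map_assoc i k, pushout.condition, Sigma.ι_desc_assoc,
    Category.id_comp]

end Universal

theorem statement13 [HasCoproducts.{v} C] (V : C) :
    -- if `V` is `Ext¹`-universal then each `Ext¹(V, A)` is a set: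
    (IsExt1UniversalIn Set.univ V → ∀ A : C, Small.{v} (ExtClass V A)) ∧
    -- conversely, if moreover `∐¹_I V = 0` for every set `I`:
    ((∀ I : Type v, CoprodDerivedZero I V) →
      (∀ A : C, Small.{v} (ExtClass V A)) → IsExt1UniversalIn Set.univ V) := by
  refine ⟨fun hV A => ?_, fun hV hsmall A _ => ?_⟩
  · obtain ⟨X, u, -, -, ⟨_, _, _, _, p, _, hu⟩, hlift⟩ := hV A trivial
    exact small_extClass_of_forall_lift hu fun E i q => hlift E trivial i q
  · obtain ⟨K, _, e, he⟩ := exists_extRel_representatives V A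
    exact exists_isUniversalExtensionIn (hV K) e he

end Stmt13
end

section
/- Let 𝒜 be a Hom-finite abelian category over a commutative ring R. Then: (1) for every object A, the endomorphism ring End_𝒜(A) is a left and right coherent ring; (2) for all objects A, B, the group Hom_𝒜(A,B) is finitely presented both as a left End_𝒜(B)-module and as a right End_𝒜(A)-module; (3) for every infinite set I there is no nonzero object X such that the coproduct X^{(I)} exists in 𝒜. -/
/-!
Common definitions for formalizing results of "Tilting preenvelopes and cotilting
precovers in general Abelian categories" (Parra–Saorín–Virili).

Conventions:
* Full subcategories of an abelian category `C` are encoded as `Set C`.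
* "Sets" (index sets of families, coproducts, …) are encoded as types in the universe `v`
  of the morphisms of `C`.
* `Ext¹(X,Y) = 0` is encoded via the splitting of all short exact sequences
  `0 → Y → E → X → 0` (equivalently, the vanishing of the Yoneda Ext group).
* Relative (`…In B`) notions encode the corresponding notion computed inside the
  full (abelian exact) subcategory determined by `B : Set C`; the ambient case is
  `B = Set.univ`.
* Coproducts are not assumed to exist: a coproduct of a family existing in the
  (sub)category is encoded by a cocone with the universal property (`IsCoproductIn`).
-/

open CategoryTheory CategoryTheory.Limits

universe w v u

attribute [local instance] CategoryTheory.Abelian.hasFiniteBiproducts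

/-!
STATEMENT 15 (Proposition `prop.Hom-finite-are-coherent`).
-/

namespace Stmt15

open Paper CategoryTheory CategoryTheory.Limits

variable {C : Type u} [Category.{v} C] [Abelian C]

/-- `Hom(A, B)` as a right `End(A)`-module (by precomposition), encoded as a left
module over the opposite ring. -/
instance homModuleEndOp (A B : C) : Module (End A)ᵐᵒᵖ (A ⟶ B) where
  smul φ f := φ.unop ≫ f
  one_smul f := Category.id_comp f
  mul_smul φ ψ f := by
    show (ψ.unop * φ.unop) ≫ f = φ.unop ≫ ψ.unop ≫ f
    show (φ.unop ≫ ψ.unop) ≫ f = φ.unop ≫ ψ.unop ≫ f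
    rw [Category.assoc]
  smul_zero φ := Limits.comp_zero
  smul_add φ f g := Preadditive.comp_add _ _ _ _ _ _
  add_smul φ ψ f := by
    show (φ.unop + ψ.unop) ≫ f = φ.unop ≫ f + ψ.unop ≫ f
    exact Preadditive.add_comp _ _ _ _ _ _
  zero_smul f := Limits.zero_comp


/-!
`R` acts on `Hom(A, B)` through `End B` and through `End A`, so `Hom(A, B)` is finitely generated
over both rings. The relations `s : Bⁿ ⟶ B` with `γ ≫ s = 0` among `γ : A ⟶ Bⁿ` are exactly the
maps factoring through `coker γ`, so they form a quotient of the finitely generated `End B`-module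
`Hom(coker γ, B)`; dually, relations on the other side come from `Hom(A, ker δ)`. Finitely generated
modules of relations give finite presentations of `Hom(A, B)` and of the finitely generated
one-sided ideals of `End A = Hom(A, A)`.

If `X^{(I)}` exists, `Hom(X^{(I)}, X) → End(X)^I` is surjective, so `End(X)^I` is a finitely
generated `R`-module. Modulo a maximal ideal `m` with `m End(X) ≠ End(X)` (Nakayama) this is an
`R/m`-vector space containing the independent family of the `Pi.single i w`, so `I` is finite
unless `End X = 0`.
-/

def HasFGSyzygies (S M : Type*) [Ring S] [AddCommGroup M] [Module S M] : Prop :=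
  ∀ (n : ℕ) (g : Fin n → M), (LinearMap.ker (Fintype.linearCombination S g)).FG

namespace HasFGSyzygies

variable {S M M' : Type*} [Ring S] [AddCommGroup M] [Module S M] [AddCommGroup M'] [Module S M']

theorem finitePresentation (h : HasFGSyzygies S M) {N : Submodule S M} (hN : N.FG) :
    Module.FinitePresentation S N := by
  obtain ⟨n, g, rfl⟩ := Submodule.fg_iff_exists_fin_generating_family.mp hN
  have hmem (s : Fin n → S) : Fintype.linearCombination S g s ∈ Submodule.span S (Set.range g) := by
    rw [← Fintype.range_linearCombination]
    exact LinearMap.mem_range_self _ s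
  refine Module.finitePresentation_of_free_of_surjective
    ((Fintype.linearCombination S g).codRestrict _ hmem) ?_ ?_
  · rintro ⟨x, hx⟩
    rw [← Fintype.range_linearCombination] at hx
    obtain ⟨s, rfl⟩ := hx
    exact ⟨s, rfl⟩
  · rw [LinearMap.ker_codRestrict]
    exact h n g

theorem finitePresentation_of_finite (h : HasFGSyzygies S M) [Module.Finite S M] :
    Module.FinitePresentation S M :=
  have := h.finitePresentation (Module.Finite.fg_top (R := S) (M := M))
  .of_equiv Submodule.topEquiv

theorem of_injective (h : HasFGSyzygies S M') (f : M →ₗ[S] M') (hf : Function.Injective f) :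
    HasFGSyzygies S M := by
  intro n g
  have hcomp : Fintype.linearCombination S (f ∘ g) = f ∘ₗ Fintype.linearCombination S g := by
    ext s
    simp [Fintype.linearCombination_apply]
  rw [← LinearMap.ker_comp_of_ker_eq_bot _ (LinearMap.ker_eq_bot.mpr hf), ← hcomp]
  exact h n (f ∘ g)

end HasFGSyzygies

theorem _root_.Submodule.exists_isMaximal_smul_top_ne_top {R M : Type*} [CommRing R]
    [AddCommGroup M] [Module R M] [Nontrivial M] [Module.Finite R M] :
    ∃ m : Ideal R, m.IsMaximal ∧ m • (⊤ : Submodule R M) ≠ ⊤ := by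
  obtain ⟨m, hm, hann⟩ := Ideal.exists_le_maximal (Module.annihilator R M)
    (by rw [Ne, Module.annihilator_eq_top_iff]; exact not_subsingleton M)
  refine ⟨m, hm, fun htop => hm.ne_top ?_⟩
  obtain ⟨r, hr, hr0⟩ := Submodule.exists_sub_one_mem_and_smul_eq_zero_of_fg_of_le_smul m ⊤
    Module.Finite.fg_top htop.ge
  have hrm : r ∈ m := hann (Module.mem_annihilator.mpr fun x => hr0 x trivial)
  rw [Ideal.eq_top_iff_one, ← sub_sub_cancel r 1]
  exact m.sub_mem hrm hr

theorem _root_.Module.Finite.finite_of_finite_pi {R M I : Type*} [CommRing R] [AddCommGroup M]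
    [Module R M] [Nontrivial M] [Module.Finite R (I → M)] : Finite I := by
  classical
  by_contra hI
  rw [not_finite_iff_infinite] at hI
  have : Module.Finite R M :=
    .of_surjective (LinearMap.proj (R := R) (φ := fun _ : I => M) (Classical.arbitrary I))
      (Function.surjective_eval _)
  obtain ⟨m, hm, hne⟩ := Submodule.exists_isMaximal_smul_top_ne_top (R := R) (M := M)
  let V := M ⧸ m • (⊤ : Submodule R M)
  let := Ideal.Quotient.field m
  have : Nontrivial V := Submodule.Quotient.nontrivial_iff.mpr hne
  have : Module.Finite R (I → V) :=
    .of_surjective (LinearMap.piMap fun _ => (m • ⊤ : Submodule R M).mkQ)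
      (Function.Surjective.piMap fun _ => Submodule.mkQ_surjective _)
  have : Module.Finite (R ⧸ m) (I → V) := .of_restrictScalars_finite R _ _
  obtain ⟨w, hw⟩ := exists_ne (0 : V)
  exact Module.Finite.not_linearIndependent_of_infinite (R := R ⧸ m) _
    (Pi.linearIndependent_single_of_ne_zero (fun _ : I => hw))

section ScalarTower

variable (R : Type*) [CommRing R] [Linear R C]

instance isScalarTower_end (A B : C) : IsScalarTower R (End B) (A ⟶ B) where
  smul_assoc _ _ _ := Linear.comp_smul _ _ _ _ _ _

instance isScalarTower_endOp (A B : C) : IsScalarTower R (End A)ᵐᵒᵖ (A ⟶ B) where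
  smul_assoc _ _ _ := Linear.smul_comp _ _ _ _ _ _

end ScalarTower

section Syzygies

open MulOpposite

variable {A B : C} {n : ℕ}

theorem linearCombination_end_eq (g : Fin n → (A ⟶ B)) (s : Fin n → End B) :
    Fintype.linearCombination (End B) g s = biproduct.lift g ≫ biproduct.desc s := by
  rw [Fintype.linearCombination_apply, biproduct.lift_desc]
  rfl

theorem linearCombination_endOp_eq (g : Fin n → (A ⟶ B)) (s : Fin n → (End A)ᵐᵒᵖ) :
    Fintype.linearCombination (End A)ᵐᵒᵖ g s =
      biproduct.lift (fun i => (s i).unop) ≫ biproduct.desc g := by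
  rw [Fintype.linearCombination_apply, biproduct.lift_desc]
  rfl

theorem hasFGSyzygies_hom_end (hB : ∀ Y : C, Module.Finite (End B) (Y ⟶ B)) :
    HasFGSyzygies (End B) (A ⟶ B) := by
  intro n g
  let γ := biproduct.lift g
  let Ψ : (cokernel γ ⟶ B) →ₗ[End B] (Fin n → End B) :=
    { toFun u i := biproduct.ι (fun _ : Fin n => B) i ≫ cokernel.π γ ≫ u
      map_add' u v := by ext i; simp
      map_smul' s u := by ext i; simp [End.smul_right] }
  have hker : LinearMap.ker (Fintype.linearCombination (End B) g) = LinearMap.range Ψ := by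
    ext s
    rw [LinearMap.mem_ker, linearCombination_end_eq]
    constructor
    · intro hs
      exact ⟨cokernel.desc γ _ hs, funext fun i => by simp [Ψ]⟩
    · rintro ⟨u, rfl⟩
      have : biproduct.desc (Ψ u) = cokernel.π γ ≫ u :=
        biproduct.hom_ext' _ _ fun i => by simp [Ψ]
      rw [this, cokernel.condition_assoc, zero_comp]
  have := hB (cokernel γ)
  rw [hker, LinearMap.range_eq_map]
  exact Module.Finite.fg_top.map Ψ

theorem hasFGSyzygies_hom_endOp (hA : ∀ Y : C, Module.Finite (End A)ᵐᵒᵖ (A ⟶ Y)) :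
    HasFGSyzygies (End A)ᵐᵒᵖ (A ⟶ B) := by
  intro n g
  let δ := biproduct.desc g
  let Ψ : (A ⟶ kernel δ) →ₗ[(End A)ᵐᵒᵖ] (Fin n → (End A)ᵐᵒᵖ) :=
    { toFun v i := op (v ≫ kernel.ι δ ≫ biproduct.π _ i)
      map_add' u v := by ext i; simp
      map_smul' φ v := by ext i; exact congrArg op (Category.assoc _ _ _) }
  have hker : LinearMap.ker (Fintype.linearCombination (End A)ᵐᵒᵖ g) = LinearMap.range Ψ := by
    ext s
    rw [LinearMap.mem_ker, linearCombination_endOp_eq]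
    constructor
    · intro hs
      exact ⟨kernel.lift δ _ hs, funext fun i => by simp [Ψ]⟩
    · rintro ⟨v, rfl⟩
      have : biproduct.lift (fun i => (Ψ v i).unop) = v ≫ kernel.ι δ :=
        biproduct.hom_ext _ _ fun i => by simp [Ψ]
      rw [this, Category.assoc, kernel.condition, comp_zero]
  have := hA (kernel δ)
  rw [hker, LinearMap.range_eq_map]
  exact Module.Finite.fg_top.map Ψ

end Syzygies

section Coherence

open MulOpposite

variable {A : C}

variable (A) in
def endLinearHom : End A →ₗ[End A] (A ⟶ A) where
  toFun := id
  map_add' _ _ := rfl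
  map_smul' _ _ := rfl

variable (A) in
def endOpLinearHom : (End A)ᵐᵒᵖ →ₗ[(End A)ᵐᵒᵖ] (A ⟶ A) where
  toFun := unop
  map_add' _ _ := rfl
  map_smul' _ _ := rfl

theorem leftCoherentRing_end (hA : HasFGSyzygies (End A) (A ⟶ A)) :
    LeftCoherentRing (End A) := fun _ hJ =>
  (hA.of_injective (endLinearHom A) Function.injective_id).finitePresentation hJ

theorem rightCoherentRing_end (hA : HasFGSyzygies (End A)ᵐᵒᵖ (A ⟶ A)) :
    RightCoherentRing (End A) := fun _ hJ =>
  (hA.of_injective (endOpLinearHom A) unop_injective).finitePresentation hJ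

end Coherence

theorem isZero_of_isCoproductIn_of_infinite (R : Type*) [CommRing R] [Linear R C]
    {I : Type v} [Infinite I] {X Q : C} {ι : I → (X ⟶ Q)}
    (hQ : IsCoproductIn Set.univ (fun _ : I => X) Q ι) [Module.Finite R (Q ⟶ X)] : IsZero X := by
  rw [IsZero.iff_id_eq_zero]
  by_contra hX
  have : Nontrivial (X ⟶ X) := ⟨⟨𝟙 X, 0, hX⟩⟩
  have : Module.Finite R (I → (X ⟶ X)) :=
    .of_surjective (LinearMap.pi fun i => Linear.leftComp R X (ι i)) fun g =>
      let ⟨h, hh, _⟩ := hQ.desc X trivial g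
      ⟨h, funext hh⟩
  have := Module.Finite.finite_of_finite_pi (R := R) (M := X ⟶ X) (I := I)
  exact not_finite I

theorem statement15 (R : Type v) [CommRing R] [CategoryTheory.Linear R C]
    -- `𝒜` is `Hom`-finite over the commutative ring `R`:
    (hfin : ∀ A B : C, Module.Finite R (A ⟶ B)) :
    -- (1) every endomorphism ring is left and right coherent:
    (∀ A : C, LeftCoherentRing (End A) ∧ RightCoherentRing (End A)) ∧
    -- (2) `Hom(A,B)` is finitely presented as a left `End(B)`-module and as a right
    -- `End(A)`-module:
    (∀ A B : C, Module.FinitePresentation (End B) (A ⟶ B) ∧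
      Module.FinitePresentation (End A)ᵐᵒᵖ (A ⟶ B)) ∧
    -- (3) no nonzero object has a coproduct of infinitely many copies of itself:
    (∀ (I : Type v), Infinite I → ∀ (X Q : C) (ι : ∀ _ : I, X ⟶ Q),
      IsCoproductIn Set.univ (fun _ : I => X) Q ι → Limits.IsZero X) := by
  have hEnd (A B : C) : Module.Finite (End B) (A ⟶ B) :=
    have := hfin A B
    .of_restrictScalars_finite R _ _
  have hEndOp (A B : C) : Module.Finite (End A)ᵐᵒᵖ (A ⟶ B) :=
    have := hfin A B
    .of_restrictScalars_finite R _ _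
  have hSyz (A B : C) : HasFGSyzygies (End B) (A ⟶ B) :=
    hasFGSyzygies_hom_end fun Y => hEnd Y B
  have hSyzOp (A B : C) : HasFGSyzygies (End A)ᵐᵒᵖ (A ⟶ B) :=
    hasFGSyzygies_hom_endOp fun Y => hEndOp A Y
  refine ⟨fun A => ⟨leftCoherentRing_end (hSyz A A), rightCoherentRing_end (hSyzOp A A)⟩,
    fun A B => ?_, fun I _ X Q ι hQ => ?_⟩
  · have := hEnd A B
    have := hEndOp A B
    exact ⟨(hSyz A B).finitePresentation_of_finite, (hSyzOp A B).finitePresentation_of_finite⟩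
  · have := hfin Q X
    exact isZero_of_isCoproductIn_of_infinite R hQ

end Stmt15
end

section
/- Let R be a nonzero commutative ring, M a nonzero finitely generated R-module and I an infinite set. Then M is not isomorphic, as an R-module, to the product M^I of I-many copies of M. -/
/-!
Common definitions for formalizing results of "Tilting preenvelopes and cotilting
precovers in general Abelian categories" (Parra–Saorín–Virili).

Conventions:
* Full subcategories of an abelian category `C` are encoded as `Set C`.
* "Sets" (index sets of families, coproducts, …) are encoded as types in the universe `v`
  of the morphisms of `C`.
* `Ext¹(X,Y) = 0` is encoded via the splitting of all short exact sequences
  `0 → Y → E → X → 0` (equivalently, the vanishing of the Yoneda Ext group).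
* Relative (`…In B`) notions encode the corresponding notion computed inside the
  full (abelian exact) subcategory determined by `B : Set C`; the ambient case is
  `B = Set.univ`.
* Coproducts are not assumed to exist: a coproduct of a family existing in the
  (sub)category is encoded by a cocone with the universal property (`IsCoproductIn`).
-/

open CategoryTheory CategoryTheory.Limits

universe w v u

attribute [local instance] CategoryTheory.Abelian.hasFiniteBiproducts

/-!
A nonzero finitely generated module over a commutative ring `R` maps onto a simple module
`R ⧸ m`, `m` maximal. If `M ≃ M^I`, then `M^I`, hence `(R ⧸ m)^I`, is finitely generated; but over
the field `R ⧸ m` it contains the free module on `I`, so `I` is finite.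
-/

theorem Module.Finite.finite_of_pi_self {R ι : Type*} [Ring R] [IsNoetherianRing R]
    [Nontrivial R] [Module.Finite R (ι → R)] : Finite ι := by
  have : Module.Finite R (ι →₀ R) := .of_injective Finsupp.lcoeFun DFunLike.coe_injective
  exact (Module.finite_finsupp_self_iff.mp this).resolve_left (not_subsingleton R)

theorem Module.exists_isMaximal_surjective_toQuotient (R M : Type*) [Ring R] [AddCommGroup M]
    [Module R M] [Module.Finite R M] [Nontrivial M] :
    ∃ m : Ideal R, m.IsMaximal ∧ ∃ f : M →ₗ[R] R ⧸ m, Function.Surjective f := by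
  obtain ⟨N, hN⟩ := IsCoatomic.exists_coatom (α := Submodule R M)
  have : IsSimpleModule R (M ⧸ N) := isSimpleModule_iff_isCoatom.mpr hN
  obtain ⟨m, hm, ⟨e⟩⟩ := isSimpleModule_iff_quot_maximal.mp this
  exact ⟨m, hm, e.toLinearMap ∘ₗ N.mkQ, e.surjective.comp N.mkQ_surjective⟩

theorem Module.Finite.finite_of_pi {R M ι : Type*} [CommRing R] [AddCommGroup M] [Module R M]
    [Nontrivial M] [Module.Finite R (ι → M)] : Finite ι := by
  cases isEmpty_or_nonempty ι with
  | inl => infer_instance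
  | inr hι =>
    have : Module.Finite R M :=
      .of_surjective (LinearMap.proj (R := R) (φ := fun _ : ι ↦ M) hι.some)
        (Function.surjective_eval hι.some)
    obtain ⟨m, hm, f, hf⟩ := exists_isMaximal_surjective_toQuotient R M
    let := Ideal.Quotient.field m
    have : Module.Finite R (ι → R ⧸ m) := .of_surjective (f.compLeft ι) hf.comp_left
    have : Module.Finite (R ⧸ m) (ι → R ⧸ m) := .of_restrictScalars_finite R _ _
    exact finite_of_pi_self (R := R ⧸ m)

theorem statement16_general {R : Type u} [CommRing R]
    (M : Type u) [AddCommGroup M] [Module R M] [Module.Finite R M] [Nontrivial M]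
    (I : Type w) [Infinite I] :
    IsEmpty (M ≃ₗ[R] (I → M)) := by
  refine ⟨fun e => ?_⟩
  have : Module.Finite R (I → M) := .equiv e
  have : Finite I := Module.Finite.finite_of_pi (R := R) (M := M)
  exact not_finite I

theorem statement16 {R : Type u} [CommRing R] [Nontrivial R]
    (M : Type u) [AddCommGroup M] [Module R M] [Module.Finite R M] [Nontrivial M]
    (I : Type w) [Infinite I] :
    IsEmpty (M ≃ₗ[R] (I → M)) :=
  statement16_general M I
end

section
/- Let 𝒜 be an abelian category and 𝒯 a preenveloping full subcategory. Then Sub(𝒯) is a reflective subcategory of 𝒜, i.e. the inclusion Sub(𝒯) → 𝒜 has a left adjoint. -/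
/-!
Common definitions for formalizing results of "Tilting preenvelopes and cotilting
precovers in general Abelian categories" (Parra–Saorín–Virili).

Conventions:
* Full subcategories of an abelian category `C` are encoded as `Set C`.
* "Sets" (index sets of families, coproducts, …) are encoded as types in the universe `v`
  of the morphisms of `C`.
* `Ext¹(X,Y) = 0` is encoded via the splitting of all short exact sequences
  `0 → Y → E → X → 0` (equivalently, the vanishing of the Yoneda Ext group).
* Relative (`…In B`) notions encode the corresponding notion computed inside the
  full (abelian exact) subcategory determined by `B : Set C`; the ambient case is
  `B = Set.univ`.
* Coproducts are not assumed to exist: a coproduct of a family existing in the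
  (sub)category is encoded by a cocone with the universal property (`IsCoproductIn`).
-/

open CategoryTheory CategoryTheory.Limits

universe w v u

attribute [local instance] CategoryTheory.Abelian.hasFiniteBiproducts

/-!
STATEMENT 17 (Proposition `ex.reflective-versus-productclosedness`).
-/

namespace Stmt17

open Paper CategoryTheory CategoryTheory.Limits

variable {C : Type u} [Category.{v} C] [Abelian C]

/-!
The reflection of `A` into `Sub(𝒯)` is the image of a `𝒯`-preenvelope `φ : A ⟶ X`. A map
`g : A ⟶ N` with `N ↪ T' ∈ 𝒯` extends along `φ` to `X ⟶ T'`; restricted to `im φ` this lands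
in `N`, because `A ↠ im φ` is an epimorphism, hence strong, and so lifts against `N ↪ T'`.
The lift is unique since `A ↠ im φ` is epi.
-/

theorem Functor.isRightAdjoint_of_exists_universal {D E : Type*} [Category D] [Category E]
    (G : E ⥤ D) (h : ∀ A : D, ∃ (B : E) (e : A ⟶ G.obj B),
      ∀ (B' : E) (g : A ⟶ G.obj B'), ∃! k : B ⟶ B', e ≫ G.map k = g) :
    G.IsRightAdjoint := by
  have (A : D) : HasInitial (StructuredArrow A G) := by
    obtain ⟨B, e, he⟩ := h A
    refine IsInitial.hasInitial (X := StructuredArrow.mk e) <|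
      IsInitial.ofUniqueHom (fun Y => StructuredArrow.homMk (he Y.right Y.hom).exists.choose
        (he Y.right Y.hom).exists.choose_spec) fun Y f => ?_
    ext
    exact (he Y.right Y.hom).unique (StructuredArrow.w f) (he Y.right Y.hom).exists.choose_spec
  exact isRightAdjointOfStructuredArrowInitials G

theorem ObjectProperty.isRightAdjoint_ι_of_exists_universal {D : Type*} [Category D]
    (P : ObjectProperty D) (h : ∀ A : D, ∃ (N : D) (_ : P N) (e : A ⟶ N),
      ∀ N', P N' → ∀ g : A ⟶ N', ∃! k : N ⟶ N', e ≫ k = g) :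
    P.ι.IsRightAdjoint := by
  refine Functor.isRightAdjoint_of_exists_universal _ fun A => ?_
  obtain ⟨N, hN, e, he⟩ := h A
  refine ⟨⟨N, hN⟩, e, fun N' g => ?_⟩
  obtain ⟨k, hk, hk_unique⟩ := he N'.1 N'.2 g
  exact ⟨ObjectProperty.homMk k, hk, fun k' hk' => ObjectProperty.hom_ext _ (hk_unique _ hk')⟩

theorem IsPreenvelope.exists_factorThruImage_comp_eq {T : Set C} {A X : C} {φ : A ⟶ X}
    (hφ : IsPreenvelope T φ) {N T' : C} (hT' : T' ∈ T) (m : N ⟶ T') [Mono m] (g : A ⟶ N) :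
    ∃ k : Abelian.image φ ⟶ N, Abelian.factorThruImage φ ≫ k = g := by
  obtain ⟨h, hh⟩ := hφ.fac T' hT' (g ≫ m)
  have : StrongEpi (Abelian.factorThruImage φ) := strongEpi_of_epi _
  have sq : CommSq g (Abelian.factorThruImage φ) m (Abelian.image.ι φ ≫ h) :=
    ⟨by rw [← Category.assoc, Abelian.image.fac, hh]⟩
  exact ⟨sq.lift, sq.fac_left⟩

theorem statement17 (T : Set C) (hT : PreenvelopingIn Set.univ T) :
    -- `Sub(𝒯)` is reflective: the inclusion functor has a left adjoint
    IsReflectiveSub (subIn Set.univ T) := by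
  refine ObjectProperty.isRightAdjoint_ι_of_exists_universal _ fun A => ?_
  obtain ⟨X, φ, hφ⟩ := hT A trivial
  refine ⟨Abelian.image φ, ⟨trivial, X, hφ.mem, Abelian.image.ι φ, inferInstance⟩,
    Abelian.factorThruImage φ, fun N ⟨_, T', hT', m, _⟩ g => ?_⟩
  obtain ⟨k, hk⟩ := IsPreenvelope.exists_factorThruImage_comp_eq hφ hT' m g
  exact ⟨k, hk, fun k' hk' => by rw [← cancel_epi (Abelian.factorThruImage φ), hk, hk']⟩

end Stmt17
end

section
/- Let 𝒜 be an (Ab.3) well-powered abelian category and ℬ a full subcategory closed under quotients. Then ℬ is coreflective in 𝒜 if and only if ℬ is closed under taking coproducts in 𝒜. In this case, denoting by σ : 𝒜 → ℬ the right adjoint of the inclusion ι : ℬ → 𝒜 and by η : ι∘σ ⇒ id_𝒜 the counit: (1) ℬ is (Ab.3) and η_X is a monomorphism for every object X; (2) if ℬ is moreover closed under taking kernels (equivalently, under subobjects), then ℬ is (Ab.4) (respectively (Ab.5), respectively a Grothendieck category) whenever 𝒜 is (Ab.4) (respectively (Ab.5), respectively Grothendieck). -/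
/-!
Common definitions for formalizing results of "Tilting preenvelopes and cotilting
precovers in general Abelian categories" (Parra–Saorín–Virili).

Conventions:
* Full subcategories of an abelian category `C` are encoded as `Set C`.
* "Sets" (index sets of families, coproducts, …) are encoded as types in the universe `v`
  of the morphisms of `C`.
* `Ext¹(X,Y) = 0` is encoded via the splitting of all short exact sequences
  `0 → Y → E → X → 0` (equivalently, the vanishing of the Yoneda Ext group).
* Relative (`…In B`) notions encode the corresponding notion computed inside the
  full (abelian exact) subcategory determined by `B : Set C`; the ambient case is
  `B = Set.univ`.
* Coproducts are not assumed to exist: a coproduct of a family existing in the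
  (sub)category is encoded by a cocone with the universal property (`IsCoproductIn`).
-/

open CategoryTheory CategoryTheory.Limits

universe w v u

attribute [local instance] CategoryTheory.Abelian.hasFiniteBiproducts

/-!
STATEMENT 18 (Proposition `prop.coreflective`).
`𝒜` is an (Ab.3), well-powered abelian category and `ℬ` a full subcategory closed under
quotients.  (Ab.4), (Ab.5) and the Grothendieck property are encoded by `Ab4Type`,
`Ab5Type` (exactness of coproducts/directed colimits = preservation of monomorphisms)
and `Ab5Type` + existence of a separator, respectively.
-/

namespace Stmt18

open Paper CategoryTheory CategoryTheory.Limits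

variable {C : Type u} [Category.{v} C] [Abelian C]

/-!
If `ι ⊣ σ`, every morphism from an object of `ℬ` to `X` factors through the counit `ε_X`, so `ε_X`
is an epimorphism whenever `X` is a colimit of objects of `ℬ`, and closure under quotients puts
`X` in `ℬ`. Conversely, `σ X` is the largest subobject of `X` lying in `ℬ`: by well-poweredness
this is the supremum of a set of subobjects, a quotient of their coproduct. The image of `ε_X` is
a quotient of `σ X`, hence factors back through `ε_X`, which makes `ε_X` a monomorphism.

Once `ℬ` is closed under kernels (hence under subobjects), monomorphisms of `ℬ` are monomorphisms
of `𝒜`, and colimits in `ℬ` are computed in `𝒜` since `ι` is a left adjoint; so exactness of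
coproducts and of directed colimits passes from `𝒜` to `ℬ`. If `G` generates `𝒜`, the quotients
of `G` lying in `ℬ` form a set whose coproduct generates `ℬ`: a morphism `G ⟶ A` with `A ∈ ℬ`
factors through its coimage, a subobject of `A`.
-/

section Coproducts

variable {𝒟 : Type*} [Category 𝒟]

theorem isCoproductCocone_iff_isColimit {I : Type*} {f : I → 𝒟} {Q : 𝒟} {ι : ∀ i, f i ⟶ Q} :
    IsCoproductCocone f Q ι ↔ Nonempty (IsColimit (Cofan.mk Q ι)) := by
  refine ⟨fun h => ⟨Cofan.IsColimit.mk _ (fun t => (h t.pt t.inj).exists.choose)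
    (fun t => (h t.pt t.inj).exists.choose_spec)
    (fun t m hm => (h t.pt t.inj).unique hm (h t.pt t.inj).exists.choose_spec)⟩, ?_⟩
  rintro ⟨hc⟩ Z g
  exact ⟨Cofan.IsColimit.desc hc g, Cofan.IsColimit.fac hc g,
    fun m hm => Cofan.IsColimit.hom_ext hc _ _ fun i =>
      (hm i).trans (Cofan.IsColimit.fac hc g i).symm⟩

theorem IsCoproductCocone.map {ℰ : Type*} [Category ℰ] (F : 𝒟 ⥤ ℰ) {I : Type*}
    [PreservesColimitsOfShape (Discrete I) F] {f : I → 𝒟} {Q : 𝒟} {ι : ∀ i, f i ⟶ Q}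
    (h : IsCoproductCocone f Q ι) :
    IsCoproductCocone (fun i => F.obj (f i)) (F.obj Q) (fun i => F.map (ι i)) :=
  isCoproductCocone_iff_isColimit.2
    ⟨isColimitCofanMkObjOfIsColimit F _ _ (isCoproductCocone_iff_isColimit.1 h).some⟩

end Coproducts

theorem isCoproductIn_univ_iff {𝒞 : Type*} [Category.{w} 𝒞] {I : Type w} {f : I → 𝒞} {Q : 𝒞}
    {ι : ∀ i, f i ⟶ Q} : IsCoproductIn Set.univ f Q ι ↔ IsCoproductCocone f Q ι :=
  ⟨fun h Z g => h.desc Z trivial g, fun h => ⟨fun _ => trivial, trivial, fun Z _ g => h Z g⟩⟩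

section Coreflective

variable {𝒟 : Type*} [Category 𝒟] (P : ObjectProperty 𝒟)

theorem isLeftAdjoint_ι_of_exists_mono
    (h : ∀ X : 𝒟, ∃ (Y : P.FullSubcategory) (m : Y.obj ⟶ X), Mono m ∧
      ∀ (Z : P.FullSubcategory) (g : Z.obj ⟶ X), ∃ l : Z.obj ⟶ Y.obj, l ≫ m = g) :
    P.ι.IsLeftAdjoint := by
  refine isLeftAdjoint_iff_hasTerminal_costructuredArrow.2 fun X => ?_
  obtain ⟨Y, m, hm, hfac⟩ := h X
  choose l hl using hfac
  refine IsTerminal.hasTerminal (X := CostructuredArrow.mk (Y := Y) (S := P.ι) m) <|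
    IsTerminal.ofUniqueHom
      (fun W => CostructuredArrow.homMk (ObjectProperty.homMk (l W.left W.hom)) (hl _ _))
      (fun W k => CostructuredArrow.hom_ext _ _ (InducedCategory.hom_ext ?_))
  exact (cancel_mono m).1 ((CostructuredArrow.w k).trans (hl _ _).symm)

theorem homEquiv_hom_comp_counit {σ : 𝒟 ⥤ P.FullSubcategory} (adj : P.ι ⊣ σ)
    {Y : P.FullSubcategory} {X : 𝒟} (g : Y.obj ⟶ X) :
    (adj.homEquiv Y X g).hom ≫ adj.counit.app X = g :=
  (adj.homEquiv_counit (g := adj.homEquiv Y X g)).symm.trans (Equiv.symm_apply_apply _ g)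

theorem hom_ext_of_comp_counit {σ : 𝒟 ⥤ P.FullSubcategory} (adj : P.ι ⊣ σ)
    {Y : P.FullSubcategory} {X : 𝒟} {a b : Y ⟶ σ.obj X}
    (h : a.hom ≫ adj.counit.app X = b.hom ≫ adj.counit.app X) : a = b :=
  (adj.homEquiv _ _).symm.injective (by rw [adj.homEquiv_counit, adj.homEquiv_counit]; exact h)

variable [P.IsClosedUnderQuotients]

theorem isClosedUnderColimitsOfShape_of_isLeftAdjoint [P.ι.IsLeftAdjoint]
    (J : Type*) [Category J] : P.IsClosedUnderColimitsOfShape J where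
  colimitsOfShape_le := by
    rintro X ⟨c⟩
    let adj := Adjunction.ofIsLeftAdjoint P.ι
    have hfac (j : J) : c.ι.app j = (adj.homEquiv ⟨_, c.prop_diag_obj j⟩ X (c.ι.app j)).hom ≫
        adj.counit.app X :=
      (homEquiv_hom_comp_counit P adj (Y := ⟨_, c.prop_diag_obj j⟩) (X := X) (c.ι.app j)).symm
    have : Epi (adj.counit.app X) := ⟨fun u v huv => c.isColimit.hom_ext fun j => by
      dsimp
      rw [hfac j, Category.assoc, Category.assoc, huv]⟩
    exact P.prop_of_epi (adj.counit.app X) (P.ι.rightAdjoint.obj X).2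

theorem hasCoproducts_fullSubcategory [P.ι.IsLeftAdjoint] [HasCoproducts.{w} 𝒟] :
    HasCoproducts.{w} P.FullSubcategory := fun I => by
  have := isClosedUnderColimitsOfShape_of_isLeftAdjoint P (Discrete I)
  infer_instance

end Coreflective

section Counit

variable (P : ObjectProperty C) [P.IsClosedUnderQuotients]

theorem mono_counit_app {σ : C ⥤ P.FullSubcategory} (adj : P.ι ⊣ σ) (X : C) :
    Mono (adj.counit.app X) := by
  set ε := adj.counit.app X
  let I : P.FullSubcategory := ⟨image ε, P.prop_of_epi (factorThruImage ε) (σ.obj X).2⟩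
  let r : I ⟶ σ.obj X := adj.homEquiv I X (image.ι ε)
  have hr : r.hom ≫ ε = image.ι ε := homEquiv_hom_comp_counit P adj _
  have hsection : (ObjectProperty.homMk (factorThruImage ε) : σ.obj X ⟶ I) ≫ r = 𝟙 _ :=
    hom_ext_of_comp_counit P adj (by simp [hr, ε])
  have : IsSplitMono (factorThruImage ε) :=
    ⟨⟨r.hom, by simpa using congrArg InducedCategory.Hom.hom hsection⟩⟩
  have : IsIso (factorThruImage ε) := isIso_of_epi_of_isSplitMono _
  rw [← image.fac ε]
  infer_instance

end Counit

section Trace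

variable (P : ObjectProperty C) [P.IsClosedUnderQuotients] [WellPowered.{v} C]
  [HasCoproducts.{v} C]

theorem prop_sSup (hcoprod : ∀ (I : Type v) (f : I → C), (∀ i, P (f i)) → P (∐ f)) {X : C}
    {s : Set (Subobject X)} (hs : ∀ K ∈ s, P K) : P (Subobject.sSup.{v} s : C) := by
  have hcop :
      P (∐ fun j : equivShrink.{v} _ '' s => ((equivShrink.{v} (Subobject X)).symm j : C)) :=
    hcoprod _ _ fun j => hs _ ((Subobject.symm_apply_mem_iff_mem_image _ _ _).2 j.2)
  exact P.prop_of_iso (Subobject.underlyingIso _).symm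
    (P.prop_of_epi (factorThruImage (Subobject.smallCoproductDesc.{v} s)) hcop)

theorem isLeftAdjoint_ι_of_coproducts
    (hcoprod : ∀ (I : Type v) (f : I → C), (∀ i, P (f i)) → P (∐ f)) : P.ι.IsLeftAdjoint := by
  refine isLeftAdjoint_ι_of_exists_mono P fun X => ?_
  let T : Subobject X := Subobject.sSup.{v} {K | P K}
  refine ⟨⟨T, prop_sSup P hcoprod fun K hK => hK⟩, T.arrow, inferInstance, fun Z g => ?_⟩
  have hg : imageSubobject g ≤ T := Subobject.le_sSup.{v} _ _ <|
    P.prop_of_iso (imageSubobjectIso g).symm (P.prop_of_epi (factorThruImage g) Z.2)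
  exact ⟨factorThruImageSubobject g ≫ Subobject.ofLE _ _ hg, by simp⟩

end Trace

section Kernels

variable (P : ObjectProperty C)

theorem isClosedUnderKernels_of_prop_kernel [P.IsClosedUnderIsomorphisms]
    (h : ∀ ⦃X Y : C⦄ (f : X ⟶ Y), P X → P Y → P (kernel f)) : P.IsClosedUnderKernels where
  kernels_le := by
    rintro _ ⟨f, k, hk, hX, hY⟩
    exact P.prop_of_iso (IsLimit.conePointUniqueUpToIso (kernelIsKernel f) hk) (h f hX hY)

theorem isClosedUnderSubobjects_of_quotients_of_kernels [P.IsClosedUnderQuotients]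
    [P.IsClosedUnderKernels] : P.IsClosedUnderSubobjects where
  prop_of_mono m _ hY := P.prop_of_isLimit_kernelFork
    (Abelian.monoIsKernelOfCokernel _ (colimit.isColimit _)) hY
    (P.prop_of_epi (cokernel.π m) hY)

variable [P.IsClosedUnderKernels]

instance preservesMonomorphisms_ι : P.ι.PreservesMonomorphisms where
  preserves {X Y} φ _ := by
    refine Abelian.mono_of_kernel_ι_eq_zero _ ?_
    let K : P.FullSubcategory := ⟨kernel φ.hom, P.prop_kernel _ X.2 Y.2⟩
    have : (ObjectProperty.homMk (kernel.ι φ.hom) : K ⟶ X) = 0 :=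
      (cancel_mono φ).1 (by ext; simp)
    exact congrArg InducedCategory.Hom.hom this

end Kernels

section ExactnessTransfer

variable (P : ObjectProperty C) [P.IsClosedUnderKernels] [P.ι.IsLeftAdjoint]
  [HasCoproducts.{v} P.FullSubcategory]

theorem ab4Type_fullSubcategory (h : Ab4Type C) : Ab4Type P.FullSubcategory := by
  refine ⟨inferInstance, fun I X Y u hu QX QY ιX ιY uu hX hY hcomm => ?_⟩
  have : Mono uu.hom := h.2 I _ _ (fun i => P.ι.map (u i)) (fun i => P.ι.map_mono (u i))
    _ _ _ _ (P.ι.map uu) (IsCoproductCocone.map P.ι hX) (IsCoproductCocone.map P.ι hY)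
    (fun i => by simp only [← Functor.map_comp, hcomm])
  exact P.ι.mono_of_mono_map this

theorem ab5Type_fullSubcategory (h : Ab5Type C) : Ab5Type P.FullSubcategory := by
  refine ⟨inferInstance, fun J _ _ F G α hα cF cG hcF hcG m hm => ?_⟩
  have : Mono m.hom := h.2 J (F ⋙ P.ι) (G ⋙ P.ι) (Functor.whiskerRight α P.ι)
    (fun j => P.ι.map_mono (α.app j)) _ _ (isColimitOfPreserves P.ι hcF)
    (isColimitOfPreserves P.ι hcG) (P.ι.map m)
    (fun j => by
      simp only [Functor.mapCocone_ι_app, Functor.whiskerRight_app, ← Functor.map_comp, hm])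
  exact P.ι.mono_of_mono_map this

end ExactnessTransfer

section Separator

variable (P : ObjectProperty C) [P.IsClosedUnderSubobjects] [WellPowered.{v} C]
  [HasCoproducts.{v} P.FullSubcategory]

theorem exists_isSeparator_fullSubcategory {G : C} (hG : IsSeparator G) :
    ∃ G' : P.FullSubcategory, IsSeparator G' := by
  let f (K : {K : Subobject G // P (cokernel K.arrow)}) : P.FullSubcategory :=
    ⟨cokernel K.1.arrow, K.2⟩
  have := hasCoproductsOfShape_of_small.{v} P.FullSubcategory
    {K : Subobject G // P (cokernel K.arrow)}
  refine ⟨∐ f, (isSeparator_sigma f).2 fun A A' a b hab => ?_⟩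
  ext
  refine (isSeparator_def G).1 hG _ _ fun h => ?_
  let K := kernelSubobject h
  have hexact : (ShortComplex.mk K.arrow h (kernelSubobject_arrow_comp h)).Exact :=
    (ShortComplex.exact_iff_image_eq_kernel _).2 (by simp [imageSubobject_mono, K])
  let c := cokernel.desc K.arrow h (kernelSubobject_arrow_comp h)
  have : Mono c := hexact.mono_cokernelDesc
  have hK : P (cokernel K.arrow) := P.prop_of_mono c A.2
  have := hab _ ⟨⟨K, hK⟩⟩ (ObjectProperty.homMk c)
  rw [← cokernel.π_desc K.arrow h (kernelSubobject_arrow_comp h), Category.assoc, Category.assoc]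
  exact cokernel.π K.arrow ≫= congrArg InducedCategory.Hom.hom this

end Separator

theorem statement18 [HasCoproducts.{v} C] [WellPowered.{v} C] (B : Set C)
    (hquot : ∀ ⦃A Q : C⦄, A ∈ B → ∀ p : A ⟶ Q, Epi p → Q ∈ B) :
    -- `ℬ` is coreflective iff it is closed under the coproducts of `𝒜`:
    (IsCoreflectiveSub B ↔
      ∀ (I : Type v) (f : I → C) (Q : C) (ι : ∀ i, f i ⟶ Q),
        (∀ i, f i ∈ B) → IsCoproductIn Set.univ f Q ι → Q ∈ B) ∧
    -- In that case, for every right adjoint `σ` of the inclusion with counit `η`: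
    (∀ (σ : C ⥤ ObjectProperty.FullSubcategory (· ∈ B))
       (adj : ObjectProperty.ι (· ∈ B) ⊣ σ),
      -- (1) `ℬ` is (Ab.3) and the counit is monomorphic:
      (HasCoproducts.{v} (ObjectProperty.FullSubcategory (· ∈ B)) ∧
        ∀ X : C, Mono (adj.counit.app X)) ∧
      -- (2) if `ℬ` is moreover closed under kernels:
      ((∀ ⦃A A' : C⦄ (f : A ⟶ A'), A ∈ B → A' ∈ B → Limits.kernel f ∈ B) →
        ((Ab4Type C → Ab4Type (ObjectProperty.FullSubcategory (· ∈ B))) ∧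
         (Ab5Type C → Ab5Type (ObjectProperty.FullSubcategory (· ∈ B))) ∧
         ((Ab5Type C ∧ ∃ G : C, IsSeparator G) →
           (Ab5Type (ObjectProperty.FullSubcategory (· ∈ B)) ∧
             ∃ G' : ObjectProperty.FullSubcategory (· ∈ B), IsSeparator G'))))) := by
  have : ObjectProperty.IsClosedUnderQuotients (· ∈ B) := ⟨fun f _ hA => hquot hA f inferInstance⟩
  refine ⟨⟨fun hcoreflective I f Q ι hf hQ => ?_, fun hclos => ?_⟩, fun σ adj => ?_⟩
  · have : (ObjectProperty.ι (· ∈ B)).IsLeftAdjoint := hcoreflective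
    have := isClosedUnderColimitsOfShape_of_isLeftAdjoint (· ∈ B) (Discrete I)
    obtain ⟨hc⟩ := isCoproductCocone_iff_isColimit.1 (isCoproductIn_univ_iff.1 hQ)
    exact ObjectProperty.prop_of_isColimit _ hc fun ⟨i⟩ => hf i
  · exact isLeftAdjoint_ι_of_coproducts _ fun I f hf => hclos I f _ _ hf
      (isCoproductIn_univ_iff.2 (isCoproductCocone_iff_isColimit.2 ⟨coproductIsCoproduct f⟩))
  have : (ObjectProperty.ι (· ∈ B)).IsLeftAdjoint := ⟨_, ⟨adj⟩⟩
  have : HasCoproducts.{v} (ObjectProperty.FullSubcategory (· ∈ B)) :=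
    hasCoproducts_fullSubcategory _
  refine ⟨⟨this, mono_counit_app _ adj⟩, fun hker => ?_⟩
  have := isClosedUnderKernels_of_prop_kernel _ hker
  have := isClosedUnderSubobjects_of_quotients_of_kernels (· ∈ B)
  exact ⟨ab4Type_fullSubcategory _, ab5Type_fullSubcategory _,
    fun ⟨h5, _, hG⟩ => ⟨ab5Type_fullSubcategory _ h5, exists_isSeparator_fullSubcategory _ hG⟩⟩

end Stmt18
end
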